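/- arXiv:1702.03524 — 7 statements merged into one kernel-verified Lean document; each statement's English description precedes it below -/
import Mathlib

section
/- The distinguishing index of the dutch windmill graph D_n^k, for n ≥ 2 and k ≥ 3, equals the minimum integer r such that (r^k - r^(⌈k/2⌉))/2 ≥ n. -/
open SimpleGraph

/-- The distinguishing index: least number of labels in an edge labeling
preserved only by the identity automorphism. -/
noncomputable def distinguishingIndex {V : Type*} (G : SimpleGraph V) : ℕ :=
  sInf {d : ℕ | ∃ f : Sym2 V → Fin d,
    ∀ φ : G ≃g G, (∀ e ∈ G.edgeSet, f (Sym2.map ⇑φ e) = f e) → ∀ v, φ v = v}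

/-- The distinguishing number: least number of labels in a vertex labeling
preserved only by the identity automorphism. -/
noncomputable def distinguishingNumber {V : Type*} (G : SimpleGraph V) : ℕ :=
  sInf {d : ℕ | ∃ f : V → Fin d,
    ∀ φ : G ≃g G, (∀ v, f (φ v) = f v) → ∀ v, φ v = v}

/-- The dutch windmill graph `D_n^k`: `n` copies of the cycle `C_k`
sharing one common central vertex (`none`). -/
def windmill (n k : ℕ) : SimpleGraph (Option (Fin n × Fin (k - 1))) :=
  SimpleGraph.fromRel (fun a b =>
    match a, b with
    | none, some (_, j) => j.val = 0 ∨ j.val = k - 2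
    | some (i, j), some (i', j') => i = i' ∧ j'.val = j.val + 1
    | _, _ => False)

namespace WM
variable {n k : ℕ}

/-- vertex `j` along cycle `i`; `vtx i 0 = none`, `vtx i j = some (i, j-1)` for `0 < j < k`. -/
def vtx (k : ℕ) (i : Fin n) (j : ℕ) : Option (Fin n × Fin (k - 1)) :=
  if h : 0 < j ∧ j < k then some (i, ⟨j - 1, by omega⟩) else none

lemma vtx_zero (i : Fin n) : vtx k i 0 = none := by simp [vtx]

lemma vtx_k (i : Fin n) : vtx k i k = none := by simp [vtx]

lemma vtx_pos (i : Fin n) {j : ℕ} (h1 : 0 < j) (h2 : j < k) :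
    vtx k i j = some (i, ⟨j - 1, by omega⟩) := by simp [vtx, h1, h2]

lemma vtx_some (i : Fin n) (j : Fin (k-1)) : vtx k i (j.val + 1) = some (i, j) := by
  have := j.isLt
  rw [vtx_pos i (by omega) (by omega)]
  simp

lemma adj_none_some (i : Fin n) (j : Fin (k-1)) :
    (windmill n k).Adj none (some (i,j)) ↔ (j.val = 0 ∨ j.val = k - 2) := by
  rw [windmill, fromRel_adj]; simp

lemma adj_some_some (i i' : Fin n) (j j' : Fin (k-1)) :
    (windmill n k).Adj (some (i,j)) (some (i',j')) ↔
      (i = i' ∧ (j'.val = j.val + 1 ∨ j.val = j'.val + 1)) := by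
  rw [windmill, fromRel_adj]
  constructor
  · rintro ⟨hne, h | h⟩
    · exact ⟨h.1, Or.inl h.2⟩
    · exact ⟨h.1.symm, Or.inr h.2⟩
  · rintro ⟨rfl, h | h⟩
    · exact ⟨by simp [Fin.ext_iff]; omega, Or.inl ⟨rfl, h⟩⟩
    · exact ⟨by simp [Fin.ext_iff]; omega, Or.inr ⟨rfl, h⟩⟩

lemma adj_none_iff (b : Option (Fin n × Fin (k-1))) :
    (windmill n k).Adj none b ↔ ∃ i j, b = some (i, j) ∧ (j.val = 0 ∨ j.val = k - 2) := by
  match b with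
  | none => simp
  | some (i, j) =>
    rw [adj_none_some]
    constructor
    · intro h; exact ⟨i, j, rfl, h⟩
    · rintro ⟨i', j', h, hj⟩; injection h with h; injection h with h1 h2; subst h1; subst h2; exact hj

/-- consecutive cycle vertices are adjacent -/
lemma adj_vtx (hk : 3 ≤ k) (i : Fin n) {j : ℕ} (hj : j < k) :
    (windmill n k).Adj (vtx k i j) (vtx k i (j + 1)) := by
  rcases Nat.eq_or_lt_of_le (by omega : 1 ≤ j + 1) with h | h
  · -- j = 0
    have hj0 : j = 0 := by omega
    subst hj0
    rw [vtx_zero, vtx_pos i (by omega) (by omega), adj_none_some]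
    left; rfl
  · rcases Nat.lt_or_ge (j+1) k with h2 | h2
    · rw [vtx_pos i (by omega) hj, vtx_pos i (by omega) h2, adj_some_some]
      exact ⟨rfl, Or.inl (by simp; omega)⟩
    · -- j + 1 = k
      have : j + 1 = k := by omega
      rw [this, vtx_k, vtx_pos i (by omega) hj]
      exact ((windmill n k).adj_symm (by rw [adj_none_some]; right; simp; omega))


variable {n k : ℕ}

/-- reflection on `Fin (k-1)` : `j ↦ k-2-j` -/
def rfl' (k : ℕ) (j : Fin (k-1)) : Fin (k-1) := ⟨k - 2 - j.val, by have := j.isLt; omega⟩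

lemma rfl'_rfl' (j : Fin (k-1)) : rfl' k (rfl' k j) = j := by
  have := j.isLt; simp [rfl', Fin.ext_iff]; omega

def bF (σ : Fin n → Fin n) (ε : Fin n → Bool) :
    Option (Fin n × Fin (k-1)) → Option (Fin n × Fin (k-1))
  | none => none
  | some (i, j) => some (σ i, if ε i then rfl' k j else j)

lemma bF_none (σ : Fin n → Fin n) (ε : Fin n → Bool) : bF (k := k) σ ε none = none := rfl
lemma bF_some (σ : Fin n → Fin n) (ε : Fin n → Bool) (i : Fin n) (j : Fin (k-1)) :
    bF σ ε (some (i,j)) = some (σ i, if ε i then rfl' k j else j) := rfl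

variable {n k : ℕ}


lemma bF_adj (σ : Fin n → Fin n) (ε : Fin n → Bool) {a b : Option (Fin n × Fin (k-1))}
    (h : (windmill n k).Adj a b) : (windmill n k).Adj (bF σ ε a) (bF σ ε b) := by
  match a, b with
  | none, none => simp at h
  | none, some (i, j) =>
    rw [adj_none_some] at h
    rw [bF_none, bF_some, adj_none_some]
    rcases Bool.eq_false_or_eq_true (ε i) with he | he <;> simp [he, rfl'] <;> omega
  | some (i, j), none =>
    have h' := h.symm
    rw [adj_none_some] at h'
    apply SimpleGraph.adj_symm
    rw [bF_none, bF_some, adj_none_some]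
    rcases Bool.eq_false_or_eq_true (ε i) with he | he <;> simp [he, rfl'] <;> omega
  | some (i, j), some (i', j') =>
    rw [adj_some_some] at h
    obtain ⟨rfl, hj⟩ := h
    rw [bF_some, bF_some, adj_some_some]
    refine ⟨rfl, ?_⟩
    have := j.isLt; have := j'.isLt
    rcases Bool.eq_false_or_eq_true (ε i) with he | he <;> simp [he, rfl'] <;> omega

/-- the builder automorphism -/
def builder (σ : Equiv.Perm (Fin n)) (ε : Fin n → Bool) : windmill n k ≃g windmill n k where
  toFun := bF σ ε
  invFun := bF σ.symm (fun i => ε (σ.symm i))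
  left_inv := by
    rintro (_ | ⟨i, j⟩)
    · rfl
    · rw [bF_some, bF_some]
      simp only [Equiv.symm_apply_apply]
      congr 1
      rcases Bool.eq_false_or_eq_true (ε i) with he | he <;> simp [he, rfl'_rfl']
  right_inv := by
    rintro (_ | ⟨i, j⟩)
    · rfl
    · rw [bF_some, bF_some]
      simp only [Equiv.apply_symm_apply]
      congr 1
      rcases Bool.eq_false_or_eq_true (ε (σ.symm i)) with he | he <;> simp [he, rfl'_rfl']
  map_rel_iff' := by
    intro a b
    constructor
    · intro h
      simp only [Equiv.coe_fn_mk] at h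
      have h2 := bF_adj (n := n) (k := k) σ.symm (fun i => ε (σ.symm i)) h
      have e1 : ∀ v, bF (n := n) (k := k) σ.symm (fun i => ε (σ.symm i)) (bF σ ε v) = v := by
        rintro (_ | ⟨i, j⟩)
        · rfl
        · rw [bF_some, bF_some]
          simp only [Equiv.symm_apply_apply]
          congr 1
          rcases Bool.eq_false_or_eq_true (ε i) with he | he <;> simp [he, rfl'_rfl']
      rwa [e1, e1] at h2
    · exact bF_adj σ ε

lemma builder_apply (σ : Equiv.Perm (Fin n)) (ε : Fin n → Bool) (v) :
    builder (k := k) σ ε v = bF σ ε v := rfl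

lemma neighbors_le_two (hk : 3 ≤ k) (i : Fin n) (j : Fin (k-1)) :
    ∃ b1 b2, ∀ b, (windmill n k).Adj (some (i,j)) b → b = b1 ∨ b = b2 := by
  have hjlt := j.isLt
  have key : ∀ b, (windmill n k).Adj (some (i,j)) b →
      (b = none ∧ (j.val = 0 ∨ j.val = k-2)) ∨
      (∃ j' : Fin (k-1), b = some (i, j') ∧ (j'.val = j.val + 1 ∨ j.val = j'.val + 1)) := by
    rintro (_ | ⟨i', j'⟩) hb
    · have := ((windmill n k).adj_symm hb)
      rw [adj_none_some] at this
      exact Or.inl ⟨rfl, this⟩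
    · rw [adj_some_some] at hb
      obtain ⟨rfl, h⟩ := hb
      exact Or.inr ⟨j', rfl, h⟩
  by_cases h0 : j.val = 0
  · refine ⟨none, some (i, ⟨1, by omega⟩), fun b hb => ?_⟩
    rcases key b hb with ⟨rfl, _⟩ | ⟨j', rfl, hj'⟩
    · exact Or.inl rfl
    · right; rcases hj' with h | h
      · congr 2; exact Fin.ext (by simp; omega)
      · omega
  by_cases hk2 : j.val = k - 2
  · refine ⟨none, some (i, ⟨k - 3, by omega⟩), fun b hb => ?_⟩
    rcases key b hb with ⟨rfl, _⟩ | ⟨j', rfl, hj'⟩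
    · exact Or.inl rfl
    · right; rcases hj' with h | h
      · omega
      · congr 2; exact Fin.ext (by simp; omega)
  · refine ⟨some (i, ⟨j.val - 1, by omega⟩), some (i, ⟨j.val + 1, by omega⟩), fun b hb => ?_⟩
    rcases key b hb with ⟨rfl, hc⟩ | ⟨j', rfl, hj'⟩
    · omega
    · rcases hj' with h | h
      · right; congr 2; exact Fin.ext (by simp; omega)
      · left; congr 2; exact Fin.ext (by simp; omega)

lemma phi_none (hn : 2 ≤ n) (hk : 3 ≤ k) (φ : windmill n k ≃g windmill n k) :
    φ none = none := by
  by_contra hc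
  obtain ⟨i₀, j₀, hp⟩ : ∃ i j, φ none = some (i, j) := by
    match h : φ none with
    | none => exact absurd h hc
    | some (i, j) => exact ⟨i, j, rfl⟩
  set a1 : Option (Fin n × Fin (k-1)) := some (⟨0, by omega⟩, ⟨0, by omega⟩) with ha1
  set a2 : Option (Fin n × Fin (k-1)) := some (⟨1, by omega⟩, ⟨0, by omega⟩) with ha2
  set a3 : Option (Fin n × Fin (k-1)) := some (⟨0, by omega⟩, ⟨k-2, by omega⟩) with ha3
  have hadj1 : (windmill n k).Adj none a1 := by rw [ha1, adj_none_some]; left; rfl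
  have hadj2 : (windmill n k).Adj none a2 := by rw [ha2, adj_none_some]; left; rfl
  have hadj3 : (windmill n k).Adj none a3 := by rw [ha3, adj_none_some]; right; rfl
  have him1 : (windmill n k).Adj (some (i₀, j₀)) (φ a1) := hp ▸ φ.map_rel_iff.mpr hadj1
  have him2 : (windmill n k).Adj (some (i₀, j₀)) (φ a2) := hp ▸ φ.map_rel_iff.mpr hadj2
  have him3 : (windmill n k).Adj (some (i₀, j₀)) (φ a3) := hp ▸ φ.map_rel_iff.mpr hadj3
  have d12 : φ a1 ≠ φ a2 := fun h => by
    have := φ.injective h; rw [ha1, ha2] at this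
    simp [Fin.ext_iff] at this
  have d13 : φ a1 ≠ φ a3 := fun h => by
    have := φ.injective h; rw [ha1, ha3] at this
    simp [Fin.ext_iff] at this; omega
  have d23 : φ a2 ≠ φ a3 := fun h => by
    have := φ.injective h; rw [ha2, ha3] at this
    simp [Fin.ext_iff] at this
  obtain ⟨b1, b2, hb⟩ := neighbors_le_two hk i₀ j₀
  rcases hb _ him1 with h1 | h1 <;> rcases hb _ him2 with h2 | h2 <;>
    rcases hb _ him3 with h3 | h3 <;>
    first
    | exact d12 (h1.trans h2.symm)
    | exact d13 (h1.trans h3.symm)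
    | exact d23 (h2.trans h3.symm)

lemma cyc_map (hk : 3 ≤ k) (φ : windmill n k ≃g windmill n k) (h0 : φ none = none)
    {i i' : Fin n}
    (hstart : φ (some (i, ⟨0, by omega⟩)) = some (i', ⟨0, by omega⟩)) :
    ∀ j : Fin (k-1), φ (some (i, j)) = some (i', j) := by
  suffices H : ∀ j : ℕ, ∀ hj : j < k - 1, φ (some (i, ⟨j, hj⟩)) = some (i', ⟨j, hj⟩) by
    intro j; have := H j.val j.isLt; simpa using this
  intro j
  induction j using Nat.strong_induction_on with
  | _ j ih =>
    intro hj
    match j with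
    | 0 => exact hstart
    | j + 1 =>
      have hjlt : j < k - 1 := by omega
      have hprev := ih j (by omega) hjlt
      have hadj : (windmill n k).Adj (some (i, ⟨j, hjlt⟩)) (some (i, ⟨j+1, hj⟩)) := by
        rw [adj_some_some]; exact ⟨rfl, Or.inl rfl⟩
      have him : (windmill n k).Adj (some (i', ⟨j, hjlt⟩)) (φ (some (i, ⟨j+1, hj⟩))) :=
        hprev ▸ φ.map_rel_iff.mpr hadj
      match hb : φ (some (i, ⟨j+1, hj⟩)) with
      | none =>
        exact absurd (φ.injective (hb.trans h0.symm)) (by simp)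
      | some (i'', j'') =>
        rw [hb] at him
        rw [adj_some_some] at him
        obtain ⟨rfl, hcase⟩ := him
        rcases hcase with h | h
        · congr 2; exact Fin.ext (by simp at h; simp; omega)
        · -- j'' = j - 1
          rcases Nat.eq_zero_or_pos j with rfl | hjpos
          · simp at h
          · have hj1 : (j : ℕ) - 1 < k - 1 := by omega
            have hpp := ih (j-1) (by omega) hj1
            have : some (i, (⟨j-1, hj1⟩ : Fin (k-1))) = some (i, (⟨j+1, hj⟩ : Fin (k-1))) := by
              apply φ.injective
              rw [hpp, hb]
              congr 2
              exact Fin.ext (by simp at h ⊢; omega)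
            simp [Fin.ext_iff] at this

lemma decomp (hn : 2 ≤ n) (hk : 3 ≤ k) (φ : windmill n k ≃g windmill n k) :
    ∃ (s : Fin n → Fin n) (ε : Fin n → Bool), ∀ v, φ v = bF s ε v := by
  have h0 := phi_none hn hk φ
  have key : ∀ i : Fin n, ∃ (i' : Fin n) (b : Bool),
      ∀ j : Fin (k-1), φ (some (i, j)) = some (i', if b then rfl' k j else j) := by
    intro i
    have hadj : (windmill n k).Adj none (some (i, ⟨0, by omega⟩)) := by
      rw [adj_none_some]; left; rfl
    have him : (windmill n k).Adj none (φ (some (i, ⟨0, by omega⟩))) :=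
      h0 ▸ φ.map_rel_iff.mpr hadj
    rw [adj_none_iff] at him
    obtain ⟨i', j', himg, hj'⟩ := him
    rcases hj' with hj0 | hjk
    · refine ⟨i', false, ?_⟩
      have hstart : φ (some (i, ⟨0, by omega⟩)) = some (i', ⟨0, by omega⟩) := by
        rw [himg]; congr 2; exact Fin.ext hj0
      have := cyc_map hk φ h0 hstart
      intro j; simpa using this j
    · -- reflected case: compose with reflection of cycle i'
      set r : windmill n k ≃g windmill n k :=
        builder (Equiv.refl (Fin n)) (fun t => decide (t = i')) with hr
      have hrnone : r none = none := rfl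
      have hrsome : ∀ j : Fin (k-1), r (some (i', j)) = some (i', rfl' k j) := by
        intro j; rw [hr, builder_apply, bF_some]; simp
      have hrsome' : ∀ (t : Fin n) (j : Fin (k-1)), t ≠ i' → r (some (t, j)) = some (t, j) := by
        intro t j ht; rw [hr, builder_apply, bF_some]; simp [ht]
      set ψ : windmill n k ≃g windmill n k := φ.trans r with hψ
      have hψv : ∀ v, ψ v = r (φ v) := fun v => rfl
      have hψ0 : ψ none = none := by rw [hψv, h0, hrnone]
      have hstart : ψ (some (i, ⟨0, by omega⟩)) = some (i', ⟨0, by omega⟩) := by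
        rw [hψv, himg, hrsome]
        congr 2
        simp [rfl', Fin.ext_iff]
        omega
      have hmap := cyc_map hk ψ hψ0 hstart
      refine ⟨i', true, fun j => ?_⟩
      have h1 : r (φ (some (i, j))) = some (i', j) := hmap j
      have h2 : r (r (φ (some (i, j)))) = r (some (i', j)) := by rw [h1]
      have hrr : ∀ v, r (r v) = v := by
        rintro (_ | ⟨t, j⟩)
        · rfl
        · by_cases ht : t = i'
          · subst ht; rw [hrsome, hrsome, rfl'_rfl']
          · rw [hrsome' t j ht, hrsome' t j ht]
      rw [hrr] at h2
      rw [h2, hrsome]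
      simp
  choose s ε hse using key
  refine ⟨s, ε, ?_⟩
  rintro (_ | ⟨i, j⟩)
  · rw [h0]; rfl
  · rw [hse i j, bF_some]

/-! ### Counting sequences up to reversal -/

def revSeq (k d : ℕ) (t : Fin k → Fin d) : Fin k → Fin d := fun j => t j.rev

lemma revSeq_revSeq (t : Fin k → Fin d) : revSeq k d (revSeq k d t) = t := by
  funext j; simp [revSeq, Fin.rev_rev]

noncomputable def rk (k d : ℕ) (t : Fin k → Fin d) : ℕ :=
  (Fintype.equivFin (Fin k → Fin d) t).val

lemma rk_inj : Function.Injective (rk k d) := fun a b h =>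
  (Fintype.equivFin (Fin k → Fin d)).injective (Fin.val_injective h)

open Classical in
noncomputable def RSet (k d : ℕ) : Finset (Fin k → Fin d) :=
  Finset.univ.filter (fun t => revSeq k d t ≠ t ∧ rk k d t < rk k d (revSeq k d t))

def palEquiv (hk : 3 ≤ k) (d : ℕ) :
    {t : Fin k → Fin d // revSeq k d t = t} ≃ (Fin ((k+1)/2) → Fin d) where
  toFun t := fun j => t.1 ⟨j.val, by have := j.isLt; omega⟩
  invFun u := ⟨fun j => u ⟨min j.val (k - 1 - j.val), by have := j.isLt; omega⟩, by
    funext j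
    show u _ = u _
    have := j.isLt
    exact congrArg u (Fin.ext (by simp [Fin.val_rev]; omega))⟩
  left_inv t := by
    apply Subtype.ext
    funext j
    show t.1 _ = t.1 j
    have hpal : t.1 j.rev = t.1 j := congrFun t.2 j
    have hjlt := j.isLt
    by_cases hj : j.val ≤ k - 1 - j.val
    · exact congrArg t.1 (Fin.ext (by simp; omega))
    · exact (congrArg t.1 (Fin.ext (by simp [Fin.val_rev]; omega))).trans hpal
  right_inv u := by
    funext j
    show u _ = u j
    have := j.isLt
    exact congrArg u (Fin.ext (by simp; omega))

open Classical in
lemma card_pal (hk : 3 ≤ k) (d : ℕ) :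
    (Finset.univ.filter (fun t : Fin k → Fin d => revSeq k d t = t)).card
      = d ^ ((k+1)/2) := by
  rw [← Fintype.card_subtype]
  rw [Fintype.card_congr (palEquiv hk d)]
  simp [Fintype.card_fun]

open Classical in
lemma card_RSet (hk : 3 ≤ k) (d : ℕ) :
    2 * (RSet k d).card = d ^ k - d ^ ((k+1)/2) := by
  classical
  have hNP : (Finset.univ.filter (fun t : Fin k → Fin d => ¬ (revSeq k d t = t))).card
      = d ^ k - d ^ ((k+1)/2) := by
    have h1 := Finset.card_filter_add_card_filter_not
      (s := (Finset.univ : Finset (Fin k → Fin d)))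
      (p := fun t => revSeq k d t = t)
    have h2 : Fintype.card (Fin k → Fin d) = d ^ k := by simp [Fintype.card_fun]
    have h3 := card_pal hk d
    have h4 : d ^ ((k+1)/2) ≤ d ^ k := by
      rcases Nat.eq_zero_or_pos d with rfl | hd
      · rw [Nat.zero_pow (by omega), Nat.zero_pow (by omega)]
      · exact Nat.pow_le_pow_right hd (by omega)
    simp only [Finset.card_univ] at h1
    omega
  set NP : Finset (Fin k → Fin d) :=
    Finset.univ.filter (fun t => ¬ (revSeq k d t = t)) with hNPdef
  have hsplit := Finset.card_filter_add_card_filter_not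
    (s := NP) (p := fun t => rk k d t < rk k d (revSeq k d t))
  have hmemNP : ∀ t : Fin k → Fin d, t ∈ NP ↔ ¬ (revSeq k d t = t) := by
    intro t; rw [hNPdef]; simp
  have hR : (NP.filter (fun t => rk k d t < rk k d (revSeq k d t))).card = (RSet k d).card := by
    congr 1
    ext t
    simp only [RSet, hNPdef, Finset.mem_filter, Finset.filter_filter, Finset.mem_univ, true_and]
  have hbij : (NP.filter (fun t => rk k d t < rk k d (revSeq k d t))).card
      = (NP.filter (fun t => ¬ (rk k d t < rk k d (revSeq k d t)))).card := by
    apply Finset.card_bij (fun t _ => revSeq k d t)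
    · intro a ha
      simp only [Finset.mem_filter, hmemNP] at ha ⊢
      obtain ⟨ha1, ha2⟩ := ha
      refine ⟨?_, ?_⟩
      · rw [revSeq_revSeq]; exact fun h => ha1 h.symm
      · rw [revSeq_revSeq]; omega
    · intro a ha b hb h
      have := congrArg (revSeq k d) h
      rwa [revSeq_revSeq, revSeq_revSeq] at this
    · intro b hb
      refine ⟨revSeq k d b, ?_, (revSeq_revSeq b)⟩
      simp only [Finset.mem_filter, hmemNP] at hb ⊢
      obtain ⟨hb1, hb2⟩ := hb
      have hne : rk k d (revSeq k d b) ≠ rk k d b := fun h => hb1 (rk_inj h)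
      refine ⟨?_, ?_⟩
      · rw [revSeq_revSeq]; exact fun h => hb1 h.symm
      · rw [revSeq_revSeq]; omega
  omega

/-! ### Edges and sequences -/

variable {d : ℕ}

def edg (k : ℕ) (i : Fin n) (j : ℕ) : Sym2 (Option (Fin n × Fin (k-1))) :=
  s(vtx k i j, vtx k i (j+1))

noncomputable def seq (f : Sym2 (Option (Fin n × Fin (k-1))) → Fin d) (i : Fin n) :
    Fin k → Fin d := fun j => f (edg k i j.val)

lemma vtx_neg (i : Fin n) {j : ℕ} (h : ¬ (0 < j ∧ j < k)) : vtx k i j = none := by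
  simp [vtx, h]

lemma edg_mem (hk : 3 ≤ k) (i : Fin n) {j : ℕ} (hj : j < k) :
    edg k i j ∈ (windmill n k).edgeSet :=
  ((windmill n k).mem_edgeSet).mpr (adj_vtx hk i hj)

lemma edge_class (hk : 3 ≤ k) {e : Sym2 (Option (Fin n × Fin (k-1)))}
    (he : e ∈ (windmill n k).edgeSet) : ∃ i j, j < k ∧ e = edg k i j := by
  induction e using Sym2.ind with
  | _ a b =>
    rw [SimpleGraph.mem_edgeSet] at he
    match a, b with
    | none, none => exact absurd rfl he.ne
    | none, some (i, j) =>
      rw [adj_none_some] at he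
      rcases he with h0 | hk2
      · refine ⟨i, 0, by omega, ?_⟩
        rw [edg, vtx_zero, vtx_pos i (by omega) (by omega)]
        rw [Sym2.eq_iff]
        simp [Fin.ext_iff]
        omega
      · refine ⟨i, k - 1, by omega, ?_⟩
        have h1 : k - 1 + 1 = k := by omega
        rw [edg, h1, vtx_k, vtx_pos i (by omega) (by omega)]
        rw [Sym2.eq_iff]
        simp [Fin.ext_iff]
        omega
    | some (i, j), none =>
      have he' := he.symm
      rw [adj_none_some] at he'
      rcases he' with h0 | hk2
      · refine ⟨i, 0, by omega, ?_⟩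
        rw [edg, vtx_zero, vtx_pos i (by omega) (by omega)]
        rw [Sym2.eq_iff]
        simp [Fin.ext_iff]
        omega
      · refine ⟨i, k - 1, by omega, ?_⟩
        have h1 : k - 1 + 1 = k := by omega
        rw [edg, h1, vtx_k, vtx_pos i (by omega) (by omega)]
        rw [Sym2.eq_iff]
        simp [Fin.ext_iff]
        omega
    | some (i, j), some (i', j') =>
      rw [adj_some_some] at he
      obtain ⟨rfl, hc⟩ := he
      have hjlt := j.isLt
      have hjlt' := j'.isLt
      rcases hc with h | h
      · refine ⟨i, j.val + 1, by omega, ?_⟩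
        rw [edg, vtx_pos i (by omega) (by omega), vtx_pos i (by omega) (by omega)]
        rw [Sym2.eq_iff]
        simp [Fin.ext_iff]
        omega
      · refine ⟨i, j'.val + 1, by omega, ?_⟩
        rw [edg, vtx_pos i (by omega) (by omega), vtx_pos i (by omega) (by omega)]
        rw [Sym2.eq_iff]
        simp [Fin.ext_iff]
        omega

lemma bF_vtx_false {s : Fin n → Fin n} {ε : Fin n → Bool} {i : Fin n}
    (h : ε i = false) (j : ℕ) : bF s ε (vtx k i j) = vtx k (s i) j := by
  by_cases hj : 0 < j ∧ j < k
  · rw [vtx_pos i hj.1 hj.2, vtx_pos (s i) hj.1 hj.2, bF_some, h]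
    simp
  · rw [vtx_neg i hj, vtx_neg (s i) hj, bF_none]

lemma bF_vtx_true (hk : 3 ≤ k) {s : Fin n → Fin n} {ε : Fin n → Bool} {i : Fin n}
    (h : ε i = true) {j : ℕ} (hj : j ≤ k) : bF s ε (vtx k i j) = vtx k (s i) (k - j) := by
  by_cases hj0 : 0 < j ∧ j < k
  · rw [vtx_pos i hj0.1 hj0.2, vtx_pos (s i) (by omega) (by omega), bF_some, h]
    simp only [if_true]
    congr 2
    exact Fin.ext (by simp [rfl']; omega)
  · rw [vtx_neg i hj0, vtx_neg (s i) (by omega), bF_none]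

lemma map_edg_false {s : Fin n → Fin n} {ε : Fin n → Bool} {i : Fin n}
    (h : ε i = false) (j : ℕ) :
    Sym2.map (bF s ε) (edg k i j) = edg k (s i) j := by
  rw [edg, Sym2.map_pair_eq, bF_vtx_false h, bF_vtx_false h, edg]

lemma map_edg_true (hk : 3 ≤ k) {s : Fin n → Fin n} {ε : Fin n → Bool} {i : Fin n}
    (h : ε i = true) {j : ℕ} (hj : j < k) :
    Sym2.map (bF s ε) (edg k i j) = edg k (s i) (k - 1 - j) := by
  rw [edg, Sym2.map_pair_eq, bF_vtx_true hk h (le_of_lt hj), bF_vtx_true hk h (by omega)]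
  have e1 : k - (j+1) = k - 1 - j := by omega
  have e2 : k - j = (k - 1 - j) + 1 := by omega
  rw [e1, e2, Sym2.eq_swap, edg]

lemma seq_eq_of (hk : 3 ≤ k) {f : Sym2 (Option (Fin n × Fin (k-1))) → Fin d}
    {s : Fin n → Fin n} {ε : Fin n → Bool}
    (hf : ∀ e ∈ (windmill n k).edgeSet, f (Sym2.map (bF s ε) e) = f e)
    {i : Fin n} (h : ε i = false) : seq f (s i) = seq f i := by
  funext j
  have := hf (edg k i j.val) (edg_mem hk i j.isLt)
  rw [map_edg_false h] at this
  exact this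

lemma seq_rev_of (hk : 3 ≤ k) {f : Sym2 (Option (Fin n × Fin (k-1))) → Fin d}
    {s : Fin n → Fin n} {ε : Fin n → Bool}
    (hf : ∀ e ∈ (windmill n k).edgeSet, f (Sym2.map (bF s ε) e) = f e)
    {i : Fin n} (h : ε i = true) : seq f (s i) = revSeq k d (seq f i) := by
  funext j
  have hjlt := j.isLt
  have := hf (edg k i (k - 1 - j.val)) (edg_mem hk i (by omega))
  rw [map_edg_true hk h (by omega)] at this
  have harith : k - 1 - (k - 1 - j.val) = j.val := by omega
  rw [harith] at this
  show f (edg k (s i) j.val) = f (edg k i j.rev.val)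
  rw [Fin.val_rev]
  have harith2 : k - 1 - j.val = k - (j.val + 1) := by omega
  rw [harith2] at this
  exact this

/-- label preservation for a builder automorphism, given label symmetry conditions -/
lemma pres_of (hk : 3 ≤ k) {f : Sym2 (Option (Fin n × Fin (k-1))) → Fin d}
    (σ : Equiv.Perm (Fin n)) (ε : Fin n → Bool)
    (hcond : ∀ (i : Fin n) (j : ℕ), j < k →
      f (edg k (σ i) (if ε i then k - 1 - j else j)) = f (edg k i j)) :
    ∀ e ∈ (windmill n k).edgeSet,
      f (Sym2.map ⇑(builder (k := k) σ ε) e) = f e := by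
  intro e he
  obtain ⟨i, j, hj, rfl⟩ := edge_class hk he
  have hco : ⇑(builder (k := k) σ ε) = bF σ ε := rfl
  rw [hco]
  by_cases hε : ε i = true
  · rw [map_edg_true hk hε hj]
    have := hcond i j hj
    rwa [hε, if_pos rfl] at this
  · have hεf : ε i = false := by simpa using hε
    rw [map_edg_false hεf]
    have := hcond i j hj
    rwa [hεf, if_neg (by simp)] at this

open Classical in
lemma forward_dir (hn : 2 ≤ n) (hk : 3 ≤ k) {d : ℕ}
    (f : Sym2 (Option (Fin n × Fin (k-1))) → Fin d)
    (hf : ∀ φ : windmill n k ≃g windmill n k,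
      (∀ e ∈ (windmill n k).edgeSet, f (Sym2.map ⇑φ e) = f e) → ∀ v, φ v = v) :
    n ≤ (RSet k d).card := by
  -- no cycle sequence is palindromic
  have hNP : ∀ i, revSeq k d (seq f i) ≠ seq f i := by
    intro i hpal
    set ε : Fin n → Bool := fun t => decide (t = i) with hε
    have hεi : ε i = true := by simp [hε]
    have hcond : ∀ (t : Fin n) (j : ℕ), j < k →
        f (edg k ((Equiv.refl (Fin n)) t) (if ε t then k - 1 - j else j)) = f (edg k t j) := by
      intro t j hj
      by_cases ht : t = i
      · subst ht
        rw [if_pos (by simp [hε])]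
        have hc := congrFun hpal ⟨j, hj⟩
        have harith : (⟨j, hj⟩ : Fin k).rev.val = k - 1 - j := by rw [Fin.val_rev]; simp; omega
        simp only [revSeq, seq] at hc
        rw [harith] at hc
        exact hc
      · rw [if_neg (by simp [hε, ht])]
        simp
    have hid := hf (builder (Equiv.refl _) ε) (pres_of hk (Equiv.refl _) ε hcond)
    have h0 := hid (some (i, ⟨0, by omega⟩))
    rw [builder_apply, bF_some, if_pos hεi] at h0
    simp [rfl', Fin.ext_iff] at h0
    omega
  -- no two distinct cycles have equal sequences
  have hswap : ∀ i1 i2 : Fin n, i1 ≠ i2 → seq f i2 = seq f i1 → False := by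
    intro i1 i2 hne hseq
    set σ := Equiv.swap i1 i2 with hσ
    have hcond : ∀ (t : Fin n) (j : ℕ), j < k →
        f (edg k (σ t) (if (fun _ : Fin n => false) t then k - 1 - j else j)) = f (edg k t j) := by
      intro t j hj
      simp only [if_neg (by simp : ¬ ((fun _ : Fin n => false) t = true))]
      by_cases ht1 : t = i1
      · subst ht1; rw [hσ, Equiv.swap_apply_left]
        exact congrFun hseq ⟨j, hj⟩
      by_cases ht2 : t = i2
      · subst ht2; rw [hσ, Equiv.swap_apply_right]
        exact (congrFun hseq ⟨j, hj⟩).symm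
      · rw [hσ, Equiv.swap_apply_of_ne_of_ne ht1 ht2]
    have hid := hf (builder σ (fun _ => false)) (pres_of hk σ (fun _ => false) hcond)
    have h0 := hid (some (i1, ⟨0, by omega⟩))
    rw [builder_apply, bF_some] at h0
    rw [if_neg (by simp)] at h0
    rw [hσ, Equiv.swap_apply_left] at h0
    simp only [Option.some.injEq, Prod.mk.injEq] at h0
    exact hne h0.1.symm
  -- no two distinct cycles have reversed sequences
  have hflip : ∀ i1 i2 : Fin n, i1 ≠ i2 → seq f i2 = revSeq k d (seq f i1) → False := by
    intro i1 i2 hne hseq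
    set σ := Equiv.swap i1 i2 with hσ
    set ε : Fin n → Bool := fun t => decide (t = i1 ∨ t = i2) with hε
    have hcond : ∀ (t : Fin n) (j : ℕ), j < k →
        f (edg k (σ t) (if ε t then k - 1 - j else j)) = f (edg k t j) := by
      intro t j hj
      by_cases ht1 : t = i1
      · subst ht1
        rw [if_pos (by simp [hε]), hσ, Equiv.swap_apply_left]
        have hc := congrFun hseq ⟨k - 1 - j, by omega⟩
        simp only [revSeq, seq] at hc
        have harith : (⟨k - 1 - j, by omega⟩ : Fin k).rev.val = j := by
          rw [Fin.val_rev]; simp; omega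
        rw [harith] at hc
        exact hc
      by_cases ht2 : t = i2
      · subst ht2
        rw [if_pos (by simp [hε]), hσ, Equiv.swap_apply_right]
        have hc := congrFun hseq ⟨j, hj⟩
        simp only [revSeq, seq] at hc
        have harith : (⟨j, hj⟩ : Fin k).rev.val = k - 1 - j := by
          rw [Fin.val_rev]; simp; omega
        rw [harith] at hc
        exact hc.symm
      · rw [if_neg (by simp [hε, ht1, ht2]), hσ, Equiv.swap_apply_of_ne_of_ne ht1 ht2]
    have hid := hf (builder σ ε) (pres_of hk σ ε hcond)
    have h0 := hid (some (i1, ⟨0, by omega⟩))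
    rw [builder_apply, bF_some] at h0
    rw [hσ, Equiv.swap_apply_left] at h0
    simp only [Option.some.injEq, Prod.mk.injEq] at h0
    exact hne h0.1.symm
  -- canonical representatives
  set c : Fin n → (Fin k → Fin d) := fun i =>
    if rk k d (seq f i) < rk k d (revSeq k d (seq f i)) then seq f i
    else revSeq k d (seq f i) with hc
  have hci : ∀ i, c i = if rk k d (seq f i) < rk k d (revSeq k d (seq f i)) then seq f i
    else revSeq k d (seq f i) := fun _ => rfl
  have hmem : ∀ i, c i ∈ RSet k d := by
    intro i
    simp only [RSet, Finset.mem_filter, Finset.mem_univ, true_and]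
    have hne := hNP i
    have hrkne : rk k d (revSeq k d (seq f i)) ≠ rk k d (seq f i) := fun h => hne (rk_inj h)
    rw [hci]
    by_cases hlt : rk k d (seq f i) < rk k d (revSeq k d (seq f i))
    · rw [if_pos hlt]; exact ⟨hne, hlt⟩
    · rw [if_neg hlt]
      refine ⟨?_, ?_⟩
      · rw [revSeq_revSeq]; exact fun h => hne h.symm
      · rw [revSeq_revSeq]; omega
  have hinj : ∀ i1 i2, c i1 = c i2 → i1 = i2 := by
    intro i1 i2 h
    by_contra hne
    rw [hci i1, hci i2] at h
    by_cases h1 : rk k d (seq f i1) < rk k d (revSeq k d (seq f i1)) <;>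
      by_cases h2 : rk k d (seq f i2) < rk k d (revSeq k d (seq f i2))
    · rw [if_pos h1, if_pos h2] at h
      exact hswap i1 i2 hne h.symm
    · rw [if_pos h1, if_neg h2] at h
      exact hflip i2 i1 (Ne.symm hne) h
    · rw [if_neg h1, if_pos h2] at h
      exact hflip i1 i2 hne h.symm
    · rw [if_neg h1, if_neg h2] at h
      have := congrArg (revSeq k d) h
      rw [revSeq_revSeq, revSeq_revSeq] at this
      exact hswap i1 i2 hne this.symm
  have hcard := Finset.card_le_card_of_injOn (s := (Finset.univ : Finset (Fin n)))
    (t := RSet k d) c (fun i _ => hmem i) (fun a _ b _ h => hinj a b h)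
  simpa using hcard

open Classical in
lemma backward_dir (hn : 2 ≤ n) (hk : 3 ≤ k) {d : ℕ} (hle : n ≤ (RSet k d).card) :
    ∃ f : Sym2 (Option (Fin n × Fin (k-1))) → Fin d,
      ∀ φ : windmill n k ≃g windmill n k,
        (∀ e ∈ (windmill n k).edgeSet, f (Sym2.map ⇑φ e) = f e) → ∀ v, φ v = v := by
  have hd : 0 < d := by
    rcases Nat.eq_zero_or_pos d with rfl | hd
    · exfalso
      have h1 : (RSet k 0).card ≤ Fintype.card (Fin k → Fin 0) :=
        le_trans (Finset.card_le_univ _) (le_of_eq (Finset.card_univ))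
      have h2 : Fintype.card (Fin k → Fin 0) = 0 := by
        simp [Fintype.card_fun]
        omega
      omega
    · exact hd
  set z : Fin d := ⟨0, hd⟩ with hz
  set g : Fin n → (Fin k → Fin d) :=
    fun i => ((RSet k d).equivFin.symm ⟨i.val, lt_of_lt_of_le i.isLt hle⟩).1 with hg
  have hgR : ∀ i, g i ∈ RSet k d := fun i => ((RSet k d).equivFin.symm _).2
  have hgprop : ∀ i, revSeq k d (g i) ≠ g i ∧ rk k d (g i) < rk k d (revSeq k d (g i)) := by
    intro i
    have := hgR i
    simpa [RSet, Finset.mem_filter] using this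
  have hginj : ∀ i1 i2, g i1 = g i2 → i1 = i2 := by
    intro i1 i2 h
    have h2 := (RSet k d).equivFin.symm.injective (Subtype.ext h)
    have h3 := congrArg Fin.val h2
    exact Fin.ext h3
  set lab : Fin n → Fin (k-1) → Fin d := fun i jf =>
    if jf.val = 0 then g i ⟨0, by omega⟩
    else if jf.val = k - 2 then g i ⟨k-1, by omega⟩ else z with hlabdef
  have hlab : ∀ i jf, lab i jf = if jf.val = 0 then g i ⟨0, by omega⟩
      else if jf.val = k - 2 then g i ⟨k-1, by omega⟩ else z := fun _ _ => rfl
  set g2 : Option (Fin n × Fin (k-1)) → Option (Fin n × Fin (k-1)) → Fin d := fun a b =>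
    match a, b with
    | none, none => z
    | none, some (i, jf) => lab i jf
    | some (i, jf), none => lab i jf
    | some (i, jf), some (i', jf') =>
        if i = i' ∧ jf'.val = jf.val + 1 then g i ⟨jf.val + 1, by have := jf.isLt; omega⟩
        else if i = i' ∧ jf.val = jf'.val + 1 then g i ⟨jf'.val + 1, by have := jf'.isLt; omega⟩
        else z
    with hg2
  have hg2ss : ∀ i jf i' jf', g2 (some (i, jf)) (some (i', jf')) =
      (if i = i' ∧ jf'.val = jf.val + 1 then g i ⟨jf.val + 1, by have := jf.isLt; omega⟩
      else if i = i' ∧ jf.val = jf'.val + 1 then g i ⟨jf'.val + 1, by have := jf'.isLt; omega⟩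
      else z) := fun _ _ _ _ => rfl
  have hsymm : ∀ a b, g2 a b = g2 b a := by
    rintro (_ | ⟨i, jf⟩) (_ | ⟨i', jf'⟩)
    · rfl
    · rfl
    · rfl
    · rw [hg2ss, hg2ss]
      by_cases h1 : i = i' ∧ jf'.val = jf.val + 1
      · obtain ⟨rfl, hv⟩ := h1
        rw [if_pos ⟨rfl, hv⟩, if_neg (by rintro ⟨-, hv2⟩; omega), if_pos ⟨rfl, hv⟩]
      · by_cases h2 : i = i' ∧ jf.val = jf'.val + 1
        · obtain ⟨rfl, hv⟩ := h2
          rw [if_neg h1, if_pos ⟨rfl, hv⟩, if_pos ⟨rfl, hv⟩]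
        · rw [if_neg h1, if_neg h2,
            if_neg (fun h => h2 ⟨h.1.symm, h.2⟩), if_neg (fun h => h1 ⟨h.1.symm, h.2⟩)]
  set f : Sym2 (Option (Fin n × Fin (k-1))) → Fin d := Sym2.lift ⟨g2, hsymm⟩ with hfdef
  have hfe : ∀ a b, f s(a, b) = g2 a b := fun _ _ => rfl
  have hfedg : ∀ (i : Fin n) (j : ℕ) (hj : j < k), f (edg k i j) = g i ⟨j, hj⟩ := by
    intro i j hj
    rcases Nat.eq_zero_or_pos j with rfl | hj0
    · rw [edg, vtx_zero, vtx_pos i (by omega) (by omega), hfe]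
      show lab i _ = _
      rw [hlab, if_pos (by simp)]
    · by_cases hjk : j = k - 1
      · subst hjk
        have hkk : k - 1 + 1 = k := by omega
        rw [edg, hkk, vtx_k, vtx_pos i hj0 (by omega), hfe]
        show lab i _ = _
        rw [hlab, if_neg (by simp <;> omega), if_pos (by simp <;> omega)]
      · rw [edg, vtx_pos i hj0 (by omega), vtx_pos i (by omega) (by omega), hfe, hg2ss,
          if_pos ⟨rfl, by simp <;> omega⟩]
        exact congrArg (g i) (Fin.ext (by simp <;> omega))
  have hseqg : ∀ i, seq f i = g i := by
    intro i
    funext j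
    exact (hfedg i j.val j.isLt).trans (congrArg (g i) (Fin.ext rfl))
  refine ⟨f, ?_⟩
  intro φ hpres
  obtain ⟨s, ε, hφ⟩ := decomp hn hk φ
  have hfun : ⇑φ = bF s ε := funext hφ
  rw [hfun] at hpres
  have hεf : ∀ i, ε i = false := by
    intro i
    by_contra hT
    have hT' : ε i = true := by simpa using hT
    have hrel := seq_rev_of hk hpres hT'
    rw [hseqg, hseqg] at hrel
    have h1 := (hgprop (s i)).2
    have h2 := (hgprop i).2
    rw [hrel, revSeq_revSeq] at h1
    omega
  have hsi : ∀ i, s i = i := by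
    intro i
    have hrel := seq_eq_of hk hpres (hεf i)
    rw [hseqg, hseqg] at hrel
    exact hginj _ _ hrel
  intro v
  rw [hφ v]
  match v with
  | none => rfl
  | some (i, jf) =>
    rw [bF_some, hεf i]
    simp [hsi i]

end WM

theorem distinguishingIndex_windmill (n k : ℕ) (hn : 2 ≤ n) (hk : 3 ≤ k) :
    distinguishingIndex (windmill n k) =
      sInf {r : ℕ | n ≤ (r ^ k - r ^ ((k + 1) / 2)) / 2} := by
  unfold distinguishingIndex
  congr 1
  ext d
  simp only [Set.mem_setOf_eq]
  have hcard := WM.card_RSet hk d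
  constructor
  · rintro ⟨f, hf⟩
    have := WM.forward_dir hn hk f hf
    omega
  · intro hle
    exact WM.backward_dir hn hk (by omega)
end

section
/- The distinguishing number of the dutch windmill graph D_n^k, for n ≥ 2 and k ≥ 3, equals the minimum integer r such that (r^(k-1) - r^(⌈(k-1)/2⌉))/2 ≥ n. -/
open SimpleGraph

/-!
An automorphism of `D_n^k` fixes the centre, the only vertex with more than two neighbours, and
then, walking along the cycles, maps each blade onto a blade, either in the same or in the reverse
direction; conversely every permutation of the blades combined with reversals of some of them is
an automorphism. Reading the labels along a blade gives a word of length `k - 1`, so a labelling is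
distinguishing exactly when no blade word is a palindrome and no two blade words agree up to
reversal. There are `r ^ (k - 1)` words over `r` letters, `r ^ ⌈(k - 1) / 2⌉ = r ^ (k / 2)` of
them palindromes, and the others fall into `(r ^ (k - 1) - r ^ (k / 2)) / 2` pairs `{w, reverse w}`.
-/

open Finset Function

theorem Function.Involutive.two_mul_card_filter_lt_add_card_filter_eq {α β : Type*} [Fintype α]
    [DecidableEq α] [LinearOrder β] {s : α → α} (hs : Involutive s) {key : α → β}
    (hkey : Injective key) [DecidablePred fun x => key x < key (s x)] :
    2 * #{x | key x < key (s x)} + #{x | s x = x} = Fintype.card α := by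
  have hswap : #{x | key (s x) < key x} = #{x | key x < key (s x)} :=
    card_nbij' s s (fun x hx => by simpa [hs x] using hx) (fun x hx => by simpa [hs x] using hx)
      (fun x _ => hs x) (fun x _ => hs x)
  have hne : #{x | s x ≠ x} = #{x | key x < key (s x)} + #{x | key (s x) < key x} := by
    rw [← card_union_of_disjoint (disjoint_filter.2 fun x _ h h' => lt_asymm h h'), ← filter_or]
    congr 1
    ext x
    simp only [mem_filter, mem_univ, true_and, ← hkey.ne_iff, ne_comm (a := key (s x))]
    exact ne_iff_lt_or_gt
  rw [← card_univ, ← card_filter_add_card_filter_not (s := univ) (fun x => s x = x), hne, hswap]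
  ring

theorem card_filter_comp_rev_eq_self (m : ℕ) (α : Type*) [Fintype α] [DecidableEq α] :
    #{w : Fin m → α | w ∘ Fin.rev = w} = Fintype.card α ^ ((m + 1) / 2) := by
  have hfold (j : Fin m) : min (j : ℕ) (Fin.rev j) < (m + 1) / 2 := by
    simp only [Fin.val_rev]; omega
  rw [← Fintype.card_fin ((m + 1) / 2), ← Fintype.card_fun, ← card_univ]
  refine card_nbij' (fun w a => w ⟨a, by omega⟩) (fun v j => v ⟨_, hfold j⟩)
    (fun _ _ => mem_coe.2 (mem_univ _)) (fun v _ => ?_) (fun w hw => ?_) (fun v _ => ?_)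
  · simp only [coe_filter, mem_univ, true_and, Set.mem_ofPred_eq]
    ext j
    simp only [comp_apply, Fin.rev_rev, min_comm]
  · simp only [coe_filter, mem_univ, true_and, Set.mem_ofPred_eq] at hw
    ext j
    rcases le_total (j : ℕ) (Fin.rev j) with h | h
    · simp only [min_eq_left h]
    · simp only [min_eq_right h]
      exact congrFun hw j
  · ext a
    simp only
    congr
    simp only [Fin.val_rev]; omega

def lexLtRevWords (m : ℕ) (α : Type*) [Fintype α] [LinearOrder α] : Finset (Fin m → α) :=
  {w | List.ofFn w < List.ofFn (w ∘ Fin.rev)}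

theorem two_mul_card_lexLtRevWords (m : ℕ) (α : Type*) [Fintype α] [LinearOrder α] :
    2 * #(lexLtRevWords m α) = Fintype.card α ^ m - Fintype.card α ^ ((m + 1) / 2) := by
  have hrev : Involutive fun w : Fin m → α => w ∘ Fin.rev := fun w => by
    ext j; simp
  have := hrev.two_mul_card_filter_lt_add_card_filter_eq List.ofFn_injective
  rw [card_filter_comp_rev_eq_self, Fintype.card_fun, Fintype.card_fin] at this
  rw [lexLtRevWords]
  omega

def SimpleGraph.IsDistinguishing {V α : Type*} (G : SimpleGraph V) (f : V → α) : Prop :=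
  ∀ φ : G ≃g G, (∀ v, f (φ v) = f v) → ∀ v, φ v = v

namespace Windmill

variable {n k m : ℕ} {α : Type*}

def orient (b : Bool) : Equiv.Perm (Fin m) := bif b then Fin.revPerm else 1

@[simp]
theorem orient_false (j : Fin m) : orient false j = j := rfl

@[simp]
theorem orient_true (j : Fin m) : orient true j = j.rev := rfl

theorem val_orient (b : Bool) (j : Fin m) : (orient b j : ℕ) = if b then m - (j + 1) else j := by
  cases b <;> simp [Fin.val_rev]

theorem orient_apply_orient (a b : Bool) (j : Fin m) :
    orient a (orient b j) = orient (xor a b) j := by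
  cases a <;> cases b <;> simp

@[simp]
theorem adj_none_some (i : Fin n) (j : Fin (k - 1)) :
    (windmill n k).Adj none (some (i, j)) ↔ (j : ℕ) = 0 ∨ (j : ℕ) = k - 2 := by
  simp [windmill]

@[simp]
theorem adj_some_none (i : Fin n) (j : Fin (k - 1)) :
    (windmill n k).Adj (some (i, j)) none ↔ (j : ℕ) = 0 ∨ (j : ℕ) = k - 2 := by
  rw [adj_comm, adj_none_some]

@[simp]
theorem adj_some_some (i i' : Fin n) (j j' : Fin (k - 1)) :
    (windmill n k).Adj (some (i, j)) (some (i', j')) ↔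
      i = i' ∧ ((j' : ℕ) = j + 1 ∨ (j : ℕ) = j' + 1) := by
  simp only [windmill, fromRel_adj, ne_eq, Option.some.injEq, Prod.mk.injEq, Fin.ext_iff]
  grind

/-- The vertex at distance `m` from the centre along the `i`-th cycle, which returns to the
centre at `m = k`. -/
def cycleVertex (i : Fin n) (m : ℕ) : Option (Fin n × Fin (k - 1)) :=
  if h : 0 < m ∧ m < k then some (i, ⟨m - 1, by omega⟩) else none

theorem cycleVertex_eq_none_iff {i : Fin n} {m : ℕ} :
    cycleVertex (k := k) i m = none ↔ m = 0 ∨ k ≤ m := by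
  unfold cycleVertex
  split_ifs <;> simp <;> omega

theorem cycleVertex_eq_some_iff {i i' : Fin n} {m : ℕ} {j : Fin (k - 1)} :
    cycleVertex i m = some (i', j) ↔ i = i' ∧ m = j + 1 := by
  unfold cycleVertex
  split_ifs <;> simp [Fin.ext_iff] <;> omega

theorem cycleVertex_zero (i : Fin n) : cycleVertex (k := k) i 0 = none :=
  cycleVertex_eq_none_iff.2 (Or.inl rfl)

theorem cycleVertex_succ (i : Fin n) (j : Fin (k - 1)) : cycleVertex i (j + 1) = some (i, j) :=
  cycleVertex_eq_some_iff.2 ⟨rfl, rfl⟩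

theorem cycleVertex_injOn (i : Fin n) {m m' : ℕ} (hm : m < k) (hm' : m' < k)
    (h : cycleVertex (k := k) i m = cycleVertex i m') : m = m' := by
  rcases m' with _ | l
  · simpa [cycleVertex_zero, cycleVertex_eq_none_iff, hm.not_ge] using h
  · exact (cycleVertex_eq_some_iff.1 (h.trans (cycleVertex_succ i ⟨l, by omega⟩))).2

theorem adj_cycleVertex_iff {i : Fin n} {m : ℕ} (hm : m + 1 < k)
    {v : Option (Fin n × Fin (k - 1))} :
    (windmill n k).Adj (cycleVertex i (m + 1)) v ↔
      v = cycleVertex i m ∨ v = cycleVertex i (m + 2) := by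
  rw [cycleVertex_succ i ⟨m, by omega⟩]
  rcases v with _ | ⟨i', j'⟩
  · simp only [adj_some_none, eq_comm (a := none), cycleVertex_eq_none_iff]
    omega
  · simp only [adj_some_some, eq_comm (a := some _), cycleVertex_eq_some_iff]
    omega

theorem map_none (hn : 2 ≤ n) (hk : 3 ≤ k) (φ : windmill n k ≃g windmill n k) :
    φ none = none := by
  rcases hφ : φ none with _ | ⟨i, j⟩
  · rfl
  exfalso
  have hnbr (v) (hv : (windmill n k).Adj none v) :
      φ v = cycleVertex i j ∨ φ v = cycleVertex i (j + 2) := by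
    rw [← adj_cycleVertex_iff (by omega), cycleVertex_succ, ← hφ]
    exact φ.map_adj_iff.2 hv
  -- the centre has three distinct neighbours, but `φ none` only two
  let a : Option (Fin n × Fin (k - 1)) := some (⟨0, by omega⟩, ⟨0, by omega⟩)
  let b : Option (Fin n × Fin (k - 1)) := some (⟨1, hn⟩, ⟨0, by omega⟩)
  let c : Option (Fin n × Fin (k - 1)) := some (⟨0, by omega⟩, ⟨k - 2, by omega⟩)
  have hab : a ≠ b := by simp [a, b]
  have hac : a ≠ c := by
    simp only [ne_eq, Option.some.injEq, Prod.mk.injEq, Fin.ext_iff, true_and, a, c]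
    omega
  have hbc : b ≠ c := by simp [b, c]
  rcases hnbr a (by simp [a]) with ha | ha <;> rcases hnbr b (by simp [b]) with hb | hb <;>
    rcases hnbr c (by simp [c]) with hc | hc
  all_goals first
    | exact hab (φ.injective (ha.trans hb.symm))
    | exact hac (φ.injective (ha.trans hc.symm))
    | exact hbc (φ.injective (hb.trans hc.symm))

theorem map_some_eq_of_map_cycleVertex_one {φ : windmill n k ≃g windmill n k}
    (h0 : φ none = none) {i i' : Fin n} (h1 : φ (cycleVertex i 1) = cycleVertex i' 1)
    (j : Fin (k - 1)) : φ (some (i, j)) = some (i', j) := by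
  suffices H : ∀ m, m + 1 < k →
      φ (cycleVertex i m) = cycleVertex i' m ∧
        φ (cycleVertex i (m + 1)) = cycleVertex i' (m + 1) by
    simpa only [cycleVertex_succ] using (H j (by omega)).2
  intro m
  induction m with
  | zero => exact fun _ => ⟨by simp only [cycleVertex_zero, h0], h1⟩
  | succ m ih =>
    intro hm
    obtain ⟨hprev, hcur⟩ := ih (by omega)
    refine ⟨hcur, ?_⟩
    have hadj :=
      φ.map_adj_iff.2 ((adj_cycleVertex_iff (i := i) (m := m) (by omega)).2 (Or.inr rfl))
    rw [hcur, adj_cycleVertex_iff (by omega), ← hprev] at hadj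
    rcases hadj with h | h
    · exact absurd (cycleVertex_injOn i (by omega) (by omega) (φ.injective h)) (by omega)
    · exact h

def bladeAut (σ : Equiv.Perm (Fin n)) (ε : Fin n → Bool) : windmill n k ≃g windmill n k where
  toEquiv := (Equiv.prodShear σ fun i => orient (ε i)).optionCongr
  map_rel_iff' := by
    rintro (_ | ⟨i, j⟩) (_ | ⟨i', j'⟩)
    all_goals simp only [Equiv.optionCongr_apply, Option.map_some, Option.map_none,
      Equiv.prodShear_apply, adj_none_some, adj_some_none, adj_some_some,
      EmbeddingLike.apply_eq_iff_eq, val_orient, SimpleGraph.irrefl, iff_self]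
    · split_ifs <;> omega
    · split_ifs <;> omega
    · constructor <;> rintro ⟨rfl, h⟩ <;> refine ⟨rfl, ?_⟩ <;> split_ifs at * <;> omega

@[simp]
theorem bladeAut_none (σ : Equiv.Perm (Fin n)) (ε : Fin n → Bool) :
    bladeAut (k := k) σ ε none = none := rfl

@[simp]
theorem bladeAut_some (σ : Equiv.Perm (Fin n)) (ε : Fin n → Bool) (i : Fin n)
    (j : Fin (k - 1)) :
    bladeAut σ ε (some (i, j)) = some (σ i, orient (ε i) j) := rfl

theorem exists_map_some_eq (hn : 2 ≤ n) (hk : 3 ≤ k) (φ : windmill n k ≃g windmill n k)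
    (i : Fin n) : ∃ i' b, ∀ j, φ (some (i, j)) = some (i', orient b j) := by
  have h0 := map_none hn hk φ
  have hadj : (windmill n k).Adj none (φ (cycleVertex i 1)) := by
    rw [← h0, φ.map_adj_iff, adj_comm, adj_cycleVertex_iff (m := 0) (by omega), cycleVertex_zero]
    exact Or.inl rfl
  rcases hv : φ (cycleVertex i 1) with _ | ⟨i', j₀⟩
  · simp [hv] at hadj
  rw [hv, adj_none_some] at hadj
  rcases hadj with hj₀ | hj₀
  · refine ⟨i', false, map_some_eq_of_map_cycleVertex_one h0 ?_⟩
    rw [hv, eq_comm, cycleVertex_eq_some_iff]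
    omega
  · -- composing with the reversal of every blade brings us back to the first case
    let R : windmill n k ≃g windmill n k := bladeAut 1 fun _ => true
    have h1 : (φ.trans R) (cycleVertex i 1) = cycleVertex i' 1 := by
      rw [RelIso.trans_apply, hv, bladeAut_some, eq_comm, cycleVertex_eq_some_iff]
      simp only [Equiv.Perm.coe_one, id_eq, orient_true, Fin.val_rev, Nat.right_eq_add, true_and]
      omega
    refine ⟨i', true, fun j => ?_⟩
    have := map_some_eq_of_map_cycleVertex_one (φ := φ.trans R) (by simp [h0, R]) h1 j
    rw [RelIso.trans_apply, ← RelIso.eq_symm_apply] at this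
    rw [this, RelIso.symm_apply_eq]
    simp [R]

def bladeWord (f : Option (Fin n × Fin (k - 1)) → α) (i : Fin n) : Fin (k - 1) → α :=
  fun j => f (some (i, j))

theorem eq_and_eq_false_of_bladeWord_comp_orient (hk : 3 ≤ k)
    {f : Option (Fin n × Fin (k - 1)) → α} (hf : (windmill n k).IsDistinguishing f)
    {i i' : Fin n} {b : Bool} (h : bladeWord f i' ∘ orient b = bladeWord f i) :
    i' = i ∧ b = false := by
  classical
  let φ : windmill n k ≃g windmill n k :=
    bladeAut (Equiv.swap i i') fun l => b && decide (l = i ∨ l = i')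
  have hφ : ∀ v, f (φ v) = f v := by
    rintro (_ | ⟨l, j⟩)
    · rfl
    by_cases hl : l = i
    · subst hl
      simpa [φ, bladeWord] using congrFun h j
    by_cases hl' : l = i'
    · subst hl'
      have := congrFun h (orient b j)
      simp only [bladeWord, comp_apply, orient_apply_orient, Bool.xor_self,
        orient_false] at this
      simpa [φ, hl] using this.symm
    · simp [φ, hl, hl', Equiv.swap_apply_of_ne_of_ne]
  have := hf φ hφ (some (i, ⟨0, by omega⟩))
  simp only [φ, bladeAut_some, Equiv.swap_apply_left, Option.some.injEq, Prod.mk.injEq] at this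
  refine ⟨this.1, ?_⟩
  cases b
  · rfl
  · have := congrArg Fin.val this.2
    simp only [true_or, decide_true, Bool.and_self, orient_true, Fin.val_rev, zero_add] at this
    omega

theorem card_le_card_lexLtRevWords [Fintype α] [LinearOrder α] (hk : 3 ≤ k)
    {f : Option (Fin n × Fin (k - 1)) → α} (hf : (windmill n k).IsDistinguishing f) :
    n ≤ #(lexLtRevWords (k - 1) α) := by
  set w := bladeWord f
  -- read each blade in the direction that makes its word lexicographically smaller
  let c (i : Fin n) : Bool := decide (List.ofFn (w i ∘ Fin.rev) < List.ofFn (w i))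
  have hmem (i : Fin n) : w i ∘ orient (c i) ∈ lexLtRevWords (k - 1) α := by
    have hpal : w i ∘ Fin.rev ≠ w i := fun h =>
      Bool.noConfusion (eq_and_eq_false_of_bladeWord_comp_orient hk hf (b := true) h).2
    have hne : List.ofFn (w i) ≠ List.ofFn (w i ∘ Fin.rev) := fun h =>
      hpal (List.ofFn_injective h).symm
    simp only [lexLtRevWords, mem_filter, mem_univ, true_and]
    cases hc : c i
    · simp only [c, decide_eq_false_iff_not, not_lt] at hc
      exact lt_of_le_of_ne hc hne
    · simp only [c, decide_eq_true_eq] at hc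
      simpa [comp_def] using hc
  have hinj : Injective fun i => w i ∘ orient (c i) := by
    intro i i' h
    refine (eq_and_eq_false_of_bladeWord_comp_orient hk hf (b := xor (c i') (c i)) ?_).1.symm
    ext j
    simpa [orient_apply_orient] using congrFun h.symm (orient (c i) j)
  simpa using card_le_card_of_injOn (s := univ) _ (fun i _ => hmem i) hinj.injOn

theorem isDistinguishing_of_lt_rev (hn : 2 ≤ n) (hk : 3 ≤ k) [LinearOrder α] (c : α)
    {w : Fin n → Fin (k - 1) → α} (hw : Injective w)
    (hlt : ∀ i, List.ofFn (w i) < List.ofFn (w i ∘ Fin.rev)) :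
    (windmill n k).IsDistinguishing fun v => v.elim c fun p => w p.1 p.2 := by
  intro φ hφ
  rintro (_ | ⟨i, j⟩)
  · exact map_none hn hk φ
  obtain ⟨i', b, hb⟩ := exists_map_some_eq hn hk φ i
  have hw' : w i' ∘ orient b = w i := funext fun j => by simpa [hb] using hφ (some (i, j))
  cases b
  · obtain rfl : i' = i := hw hw'
    simp [hb]
  · -- then `w i` and `w i'` would each be lexicographically smaller than the other
    have h₁ : w i' ∘ Fin.rev = w i := hw'
    have h₂ : w i' = w i ∘ Fin.rev := by
      rw [← h₁]
      ext
      simp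
    have := hlt i'
    rw [h₁, h₂] at this
    exact absurd this (hlt i).asymm

theorem exists_isDistinguishing [Fintype α] [LinearOrder α] (hn : 2 ≤ n) (hk : 3 ≤ k)
    (h : n ≤ #(lexLtRevWords (k - 1) α)) :
    ∃ f : Option (Fin n × Fin (k - 1)) → α, (windmill n k).IsDistinguishing f := by
  obtain ⟨g⟩ : Nonempty (Fin n ↪ lexLtRevWords (k - 1) α) :=
    Embedding.nonempty_of_card_le (by simpa using h)
  let w (i : Fin n) : Fin (k - 1) → α := g i
  exact ⟨_, isDistinguishing_of_lt_rev hn hk (w ⟨0, by omega⟩ ⟨0, by omega⟩)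
    (Subtype.val_injective.comp g.injective) fun i => (mem_filter.1 (g i).2).2⟩

end Windmill

theorem distinguishingNumber_windmill (n k : ℕ) (hn : 2 ≤ n) (hk : 3 ≤ k) :
    distinguishingNumber (windmill n k) =
      sInf {r : ℕ | n ≤ (r ^ (k - 1) - r ^ (k / 2)) / 2} := by
  have hcount (r : ℕ) : (r ^ (k - 1) - r ^ (k / 2)) / 2 = #(lexLtRevWords (k - 1) (Fin r)) := by
    have := two_mul_card_lexLtRevWords (k - 1) (Fin r)
    rw [Fintype.card_fin, show (k - 1 + 1) / 2 = k / 2 by omega] at this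
    omega
  unfold distinguishingNumber
  congr 1
  ext r
  rw [Set.mem_ofPred_eq, Set.mem_ofPred_eq, hcount]
  exact ⟨fun ⟨f, hf⟩ => Windmill.card_le_card_lexLtRevWords hk hf,
    Windmill.exists_isDistinguishing hn hk⟩
end

section
/- If p ≤ q, then the distinguishing index of the complete bipartite graph K_{p,q} satisfies D'(K_{p,q}) ≤ ⌈q^(1/p)⌉ + 1. -/
open SimpleGraph

/-- digits determine the number -/
lemma digitsEqAux (c : ℕ) (hc : 0 < c) :
    ∀ p A B : ℕ, A < c ^ p → B < c ^ p → (∀ i < p, A / c ^ i % c = B / c ^ i % c) → A = B := by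
  intro p
  induction p with
  | zero => intro A B hA hB _; simp at hA hB; omega
  | succ n ih =>
    intro A B hA hB h
    have h0 := h 0 (by omega)
    simp at h0
    have hd : A / c = B / c := by
      apply ih
      · rw [Nat.div_lt_iff_lt_mul hc, ← pow_succ]; exact hA
      · rw [Nat.div_lt_iff_lt_mul hc, ← pow_succ]; exact hB
      · intro i hi
        have := h (i + 1) (by omega)
        rw [Nat.div_div_eq_div_mul, Nat.div_div_eq_div_mul, mul_comm c (c ^ i), ← pow_succ]
        exact this
    have h1 := Nat.div_add_mod A c
    have h2 := Nat.div_add_mod B c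
    rw [hd] at h1
    omega

def labN (p c a b : ℕ) : ℕ :=
  if b < a ∨ (a = p - 1 ∧ b = p - 1) then c else b / c ^ a % c

lemma labN_le (p c a b : ℕ) (hc : 0 < c) : labN p c a b ≤ c := by
  unfold labN; split
  · exact le_refl c
  · exact (Nat.mod_lt _ hc).le

lemma labN_eq_c_iff (p c a b : ℕ) (hc : 0 < c) :
    labN p c a b = c ↔ (b < a ∨ (a = p - 1 ∧ b = p - 1)) := by
  by_cases h : b < a ∨ (a = p - 1 ∧ b = p - 1)
  · rw [labN, if_pos h]; exact iff_of_true rfl h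
  · rw [labN, if_neg h]; exact iff_of_false (Nat.mod_lt _ hc).ne h

lemma labN_lt_ne (p q c : ℕ) (hp : 1 ≤ p) (hpq : p ≤ q) (hqc : q ≤ c ^ p) (hc : 2 ≤ c)
    (a b : ℕ) (ha : a < q) (hb : b < q) (hab : a < b) :
    ∃ i < p, labN p c i a ≠ labN p c i b := by
  have hc0 : 0 < c := by omega
  by_cases hbp : b < p - 1
  · refine ⟨a + 1, by omega, ?_⟩
    unfold labN
    rw [if_pos (Or.inl (by omega)), if_neg (by omega)]
    exact (Nat.mod_lt _ hc0).ne'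
  · by_cases hbp2 : b = p - 1
    · by_cases hap : a + 1 < p - 1
      · refine ⟨a + 1, by omega, ?_⟩
        unfold labN
        rw [if_pos (Or.inl (by omega)), if_neg (by omega)]
        exact (Nat.mod_lt _ hc0).ne'
      · -- a = p - 2, b = p - 1, p ≥ 2
        have hp2 : 2 ≤ p := by omega
        refine ⟨0, by omega, ?_⟩
        unfold labN
        rw [if_neg (by omega), if_neg (by omega)]
        simp only [pow_zero, Nat.div_one]
        intro hmod
        have hdvd : c ∣ b - a := (Nat.modEq_iff_dvd' (by omega)).mp hmod
        have hba : b - a = 1 := by omega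
        rw [hba] at hdvd
        have := Nat.le_of_dvd one_pos hdvd
        omega
    · -- b ≥ p
      have hbP : p ≤ b := by omega
      by_cases hap : a < p - 1
      · refine ⟨a + 1, by omega, ?_⟩
        unfold labN
        rw [if_pos (Or.inl (by omega)), if_neg (by omega)]
        exact (Nat.mod_lt _ hc0).ne'
      · by_cases hap2 : a = p - 1
        · refine ⟨p - 1, by omega, ?_⟩
          unfold labN
          rw [if_pos (Or.inr (by omega)), if_neg (by omega)]
          exact (Nat.mod_lt _ hc0).ne'
        · -- a ≥ p, b ≥ p : digits differ
          have haP : p ≤ a := by omega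
          by_contra hcon
          push_neg at hcon
          have : a = b := by
            apply digitsEqAux c hc0 p a b (by omega) (by omega)
            intro i hi
            have := hcon i hi
            unfold labN at this
            rw [if_neg (by omega), if_neg (by omega)] at this
            exact this
          omega

lemma labN_inj (p q c : ℕ) (hp : 1 ≤ p) (hpq : p ≤ q) (hqc : q ≤ c ^ p) (hc : 2 ≤ c)
    (a b : ℕ) (ha : a < q) (hb : b < q) (h : ∀ i < p, labN p c i a = labN p c i b) : a = b := by
  rcases Nat.lt_trichotomy a b with h1 | h1 | h1
  · obtain ⟨i, hi, hne⟩ := labN_lt_ne p q c hp hpq hqc hc a b ha hb h1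
    exact absurd (h i hi) hne
  · exact h1
  · obtain ⟨i, hi, hne⟩ := labN_lt_ne p q c hp hpq hqc hc b a hb ha h1
    exact absurd (h i hi).symm hne

lemma card_filter_val_lt (q k : ℕ) (hk : k ≤ q) :
    (Finset.univ.filter fun j : Fin q => j.val < k).card = k := by
  rw [← Finset.card_range k]
  apply Finset.card_bij (fun j _ => j.val)
  · intro a ha; simp at ha ⊢; omega
  · intro a ha b hb hab; exact Fin.ext hab
  · intro b hb; simp at hb; exact ⟨⟨b, by omega⟩, by simp; omega, rfl⟩

open SimpleGraph


def gN (p q c : ℕ) : (Fin p ⊕ Fin q) → (Fin p ⊕ Fin q) → ℕ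
  | .inl i, .inr j => labN p c i.val j.val
  | .inr j, .inl i => labN p c i.val j.val
  | _, _ => 0

lemma gN_symm (p q c : ℕ) : ∀ x y, gN p q c x y = gN p q c y x := by
  rintro (i | j) (i' | j') <;> rfl

noncomputable def fS (p q c : ℕ) : Sym2 (Fin p ⊕ Fin q) → ℕ :=
  Sym2.lift ⟨gN p q c, gN_symm p q c⟩

lemma fS_eval (p q c : ℕ) (x y : Fin p ⊕ Fin q) : fS p q c s(x, y) = gN p q c x y := by
  simp [fS]

lemma fS_le (p q c : ℕ) (hc : 0 < c) (e : Sym2 (Fin p ⊕ Fin q)) : fS p q c e ≤ c := by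
  induction e using Sym2.ind with
  | _ x y =>
    rw [fS_eval]
    rcases x with i | j <;> rcases y with i' | j'
    · exact Nat.zero_le c
    · exact labN_le p c _ _ hc
    · exact labN_le p c _ _ hc
    · exact Nat.zero_le c

lemma cbg_adj (p q : ℕ) (x y : Fin p ⊕ Fin q) :
    (completeBipartiteGraph (Fin p) (Fin q)).Adj x y ↔ ¬ (x.isLeft = y.isLeft) := by
  rcases x with i | j <;> rcases y with i' | j' <;> simp [completeBipartiteGraph]

theorem distinguishingIndex_completeBipartite_le (p q : ℕ) (hp : 1 ≤ p) (hpq : p ≤ q) :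
    distinguishingIndex (completeBipartiteGraph (Fin p) (Fin q)) ≤
      ⌈(q : ℝ) ^ ((p : ℝ)⁻¹)⌉₊ + 1 := by
  by_cases hq1 : q ≤ 1
  · -- q = 1, hence p = 1 : the set is empty, sInf = 0
    have hp1 : p = 1 := by omega
    have hq : q = 1 := by omega
    subst hp1; subst hq
    rw [distinguishingIndex]
    have hempty : {d : ℕ | ∃ f : Sym2 (Fin 1 ⊕ Fin 1) → Fin d,
        ∀ φ : (completeBipartiteGraph (Fin 1) (Fin 1)) ≃g (completeBipartiteGraph (Fin 1) (Fin 1)),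
          (∀ e ∈ (completeBipartiteGraph (Fin 1) (Fin 1)).edgeSet,
            f (Sym2.map ⇑φ e) = f e) → ∀ v, φ v = v} = ∅ := by
      rw [Set.eq_empty_iff_forall_notMem]
      rintro d ⟨f, hf⟩
      let φ : (completeBipartiteGraph (Fin 1) (Fin 1)) ≃g
          (completeBipartiteGraph (Fin 1) (Fin 1)) :=
        ⟨Equiv.sumComm (Fin 1) (Fin 1), by
          rintro (a | a) (b | b) <;> simp [completeBipartiteGraph]⟩
      have hpres : ∀ e ∈ (completeBipartiteGraph (Fin 1) (Fin 1)).edgeSet,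
          f (Sym2.map ⇑φ e) = f e := by
        intro e he
        induction e using Sym2.ind with
        | _ x y =>
          rw [SimpleGraph.mem_edgeSet] at he
          rcases x with i | j <;> rcases y with i' | j'
          · simp [completeBipartiteGraph] at he
          · have : i = 0 := Subsingleton.elim _ _
            have : j' = 0 := Subsingleton.elim _ _
            subst this; subst ‹i = 0›
            have h1 : Sym2.map ⇑φ s(Sum.inl (0 : Fin 1), Sum.inr (0 : Fin 1)) =
                s(Sum.inr (0 : Fin 1), Sum.inl (0 : Fin 1)) := by
              rw [Sym2.map_pair_eq]; rfl
            rw [h1, Sym2.eq_swap]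
          · have : j = 0 := Subsingleton.elim _ _
            have : i' = 0 := Subsingleton.elim _ _
            subst this; subst ‹j = 0›
            have h1 : Sym2.map ⇑φ s(Sum.inr (0 : Fin 1), Sum.inl (0 : Fin 1)) =
                s(Sum.inl (0 : Fin 1), Sum.inr (0 : Fin 1)) := by
              rw [Sym2.map_pair_eq]; rfl
            rw [h1, Sym2.eq_swap]
          · simp [completeBipartiteGraph] at he
      have := hf φ hpres (Sum.inl 0)
      simp [φ] at this
    rw [hempty, Nat.sInf_empty]
    exact Nat.zero_le _
  · -- main case : q ≥ 2
    have hq2 : 2 ≤ q := by omega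
    set c := ⌈(q : ℝ) ^ ((p : ℝ)⁻¹)⌉₊ with hcdef
    have hp0 : 0 < p := hp
    have hrpos : (0 : ℝ) < (q : ℝ) ^ ((p : ℝ)⁻¹) := by
      apply Real.rpow_pos_of_pos
      exact_mod_cast (by omega : 0 < q)
    have hc2 : 2 ≤ c := by
      have h1 : (1 : ℝ) < (q : ℝ) ^ ((p : ℝ)⁻¹) := by
        rw [Real.one_lt_rpow_iff_of_pos (by exact_mod_cast (by omega : 0 < q))]
        left
        constructor
        · exact_mod_cast hq2.trans_lt' one_lt_two
        · positivity
      have : 1 < c := Nat.lt_ceil.mpr (by exact_mod_cast h1)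
      omega
    have hc0 : 0 < c := by omega
    have hqc : q ≤ c ^ p := by
      have h1 : ((q : ℝ) ^ ((p : ℝ)⁻¹)) ≤ (c : ℝ) := Nat.le_ceil _
      have h2 : ((q : ℝ) ^ ((p : ℝ)⁻¹)) ^ p ≤ (c : ℝ) ^ p :=
        pow_le_pow_left₀ hrpos.le h1 p
      rw [Real.rpow_inv_natCast_pow (by positivity) (by omega)] at h2
      have : (q : ℝ) ≤ ((c ^ p : ℕ) : ℝ) := by push_cast; exact h2
      exact_mod_cast this
    rw [distinguishingIndex]
    apply Nat.sInf_le
    refine ⟨fun e => ⟨fS p q c e % (c + 1), Nat.mod_lt _ (by omega)⟩, ?_⟩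
    intro φ hpres
    -- preserved labels in value form
    have hpres' : ∀ (i : Fin p) (j : Fin q),
        fS p q c (Sym2.map ⇑φ s(Sum.inl i, Sum.inr j)) = labN p c i.val j.val := by
      intro i j
      have he : s(Sum.inl i, Sum.inr j) ∈ (completeBipartiteGraph (Fin p) (Fin q)).edgeSet := by
        rw [SimpleGraph.mem_edgeSet]; simp [completeBipartiteGraph]
      have := hpres _ he
      rw [Fin.mk.injEq] at this
      rw [Nat.mod_eq_of_lt (by have := fS_le p q c hc0 (Sym2.map ⇑φ s(Sum.inl i, Sum.inr j)); omega),
        Nat.mod_eq_of_lt (by have := fS_le p q c hc0 s(Sum.inl i, Sum.inr j); omega)] at this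
      rw [this, fS_eval]
      rfl
    have hsame : ∀ v w : Fin p ⊕ Fin q, ((φ v).isLeft = (φ w).isLeft ↔ v.isLeft = w.isLeft) := by
      intro v w
      have h1 : (completeBipartiteGraph (Fin p) (Fin q)).Adj (φ v) (φ w) ↔
          (completeBipartiteGraph (Fin p) (Fin q)).Adj v w := φ.map_rel_iff
      rw [cbg_adj, cbg_adj] at h1
      exact not_iff_not.mp h1
    by_cases hb : (φ (Sum.inl ⟨0, hp0⟩)).isLeft = true
    · -- side preserving
      have hLft : ∀ i : Fin p, ∃ i', φ (Sum.inl i) = Sum.inl i' := by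
        intro i
        have h1 := (hsame (Sum.inl i) (Sum.inl ⟨0, hp0⟩)).mpr rfl
        rw [hb] at h1
        rcases hφ : φ (Sum.inl i) with i' | j'
        · exact ⟨i', rfl⟩
        · rw [hφ] at h1; simp at h1
      have hRgt : ∀ j : Fin q, ∃ j', φ (Sum.inr j) = Sum.inr j' := by
        intro j
        have h1 := hsame (Sum.inr j) (Sum.inl ⟨0, hp0⟩)
        rw [hb] at h1
        rcases hφ : φ (Sum.inr j) with i' | j'
        · rw [hφ] at h1; simp at h1
        · exact ⟨j', rfl⟩
      choose σ hσ using hLft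
      choose τ hτ using hRgt
      have hlab : ∀ (i : Fin p) (j : Fin q),
          labN p c (σ i).val (τ j).val = labN p c i.val j.val := by
        intro i j
        have := hpres' i j
        rw [Sym2.map_pair_eq, hσ, hτ, fS_eval] at this
        exact this
      have hτinj : Function.Injective τ := by
        intro a b h
        have h2 : φ (Sum.inr a) = φ (Sum.inr b) := by rw [hτ a, hτ b, h]
        simpa using φ.injective h2
      have hτbij : Function.Bijective τ := Finite.injective_iff_bijective.mp hτinj
      have hcard : ∀ i : Fin p,
          (Finset.univ.filter fun j : Fin q => labN p c i.val j.val = c).card =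
          (Finset.univ.filter fun j : Fin q => labN p c (σ i).val j.val = c).card := by
        intro i
        apply Finset.card_equiv (Equiv.ofBijective τ hτbij)
        intro j
        simp only [Finset.mem_filter, Finset.mem_univ, true_and, Equiv.ofBijective_apply]
        rw [hlab i j]
      have hcnt : ∀ i : Fin p,
          (Finset.univ.filter fun j : Fin q => labN p c i.val j.val = c).card =
          if i.val = p - 1 then p else i.val := by
        intro i
        have hfc : ∀ j : Fin q, (labN p c i.val j.val = c ↔
            (j.val < i.val ∨ (i.val = p - 1 ∧ j.val = p - 1))) :=
          fun j => labN_eq_c_iff p c i.val j.val hc0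
        by_cases hip : i.val = p - 1
        · rw [if_pos hip]
          have : (Finset.univ.filter fun j : Fin q => labN p c i.val j.val = c) =
              (Finset.univ.filter fun j : Fin q => j.val < p) := by
            apply Finset.filter_congr
            intro j _
            rw [hfc j]
            have := j.isLt
            omega
          rw [this, card_filter_val_lt q p hpq]
        · rw [if_neg hip]
          have : (Finset.univ.filter fun j : Fin q => labN p c i.val j.val = c) =
              (Finset.univ.filter fun j : Fin q => j.val < i.val) := by
            apply Finset.filter_congr
            intro j _
            rw [hfc j]
            omega
          rw [this, card_filter_val_lt q i.val (le_of_lt (lt_of_lt_of_le i.isLt hpq))]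
      have hσid : ∀ i, σ i = i := by
        intro i
        have h1 := hcard i
        rw [hcnt i, hcnt (σ i)] at h1
        have hi1 := i.isLt
        have hi2 := (σ i).isLt
        apply Fin.ext
        split at h1 <;> split at h1 <;> omega
      have hτid : ∀ j, τ j = j := by
        intro j
        apply Fin.ext
        apply labN_inj p q c hp hpq hqc hc2 _ _ (τ j).isLt j.isLt
        intro i hi
        have := hlab ⟨i, hi⟩ j
        rw [hσid] at this
        exact this
      rintro (i | j)
      · rw [hσ i, hσid i]
      · rw [hτ j, hτid j]
    · -- side swapping : contradiction
      exfalso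
      rw [Bool.not_eq_true] at hb
      have hInlR : ∀ i : Fin p, ∃ j', φ (Sum.inl i) = Sum.inr j' := by
        intro i
        have h1 := (hsame (Sum.inl i) (Sum.inl ⟨0, hp0⟩)).mpr rfl
        rw [hb] at h1
        rcases hφ : φ (Sum.inl i) with i' | j'
        · rw [hφ] at h1; simp at h1
        · exact ⟨j', rfl⟩
      have hInrL : ∀ j : Fin q, ∃ i', φ (Sum.inr j) = Sum.inl i' := by
        intro j
        have h1 := hsame (Sum.inr j) (Sum.inl ⟨0, hp0⟩)
        rw [hb] at h1
        rcases hφ : φ (Sum.inr j) with i' | j'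
        · exact ⟨i', rfl⟩
        · rw [hφ] at h1; simp at h1
      choose ρ hρ using hInrL
      have hρinj : Function.Injective ρ := by
        intro a b h
        have h2 : φ (Sum.inr a) = φ (Sum.inr b) := by rw [hρ a, hρ b, h]
        simpa using φ.injective h2
      have hqp : q ≤ p := by
        have := Fintype.card_le_of_injective ρ hρinj
        simpa using this
      have hpq2 : p = q := le_antisymm hpq hqp
      have hp2 : 2 ≤ p := by omega
      obtain ⟨j₀, hj₀⟩ := hInlR ⟨0, hp0⟩
      obtain ⟨v, hv⟩ : ∃ v, φ v = Sum.inl (⟨p - 1, by omega⟩ : Fin p) :=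
        ⟨φ.symm _, φ.apply_symm_apply _⟩
      obtain ⟨j₁, rfl⟩ : ∃ j₁, v = Sum.inr j₁ := by
        rcases v with i | j
        · obtain ⟨j', hj'⟩ := hInlR i
          rw [hj'] at hv
          exact absurd hv (by simp)
        · exact ⟨j, rfl⟩
      have hkey := hpres' ⟨0, hp0⟩ j₁
      rw [Sym2.map_pair_eq, hj₀, hv, Sym2.eq_swap, fS_eval] at hkey
      simp only [gN, Fin.val_mk] at hkey
      -- hkey : labN p c (p - 1) ↑j₀ = labN p c 0 ↑j₁
      have hj₀lt : j₀.val < p := by rw [hpq2]; exact j₀.isLt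
      rw [(labN_eq_c_iff p c (p - 1) j₀.val hc0).mpr (by omega)] at hkey
      have := (labN_eq_c_iff p c 0 j₁.val hc0).mp hkey.symm
      omega
end

section
/- For n ≥ 6, the distinguishing index of the cycle C_n equals 2, and for n ∈ {3,4,5} it equals 3. -/
open SimpleGraph

/-!
Every automorphism of `C_n` is a rotation `v ↦ a + v` or a reflection `v ↦ a - v` of `ℤ/n`,
since it is determined by the images of two adjacent vertices. Labelling the edge `{i, i + 1}`
by `c i`, an edge labelling of `C_n` is therefore distinguishing as soon as the cyclic word `c`
is fixed by no nontrivial rotation and by no reflection. For `n ≥ 6` the binary word with ones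
exactly at `0, 1, 3` has this property. For `n ≤ 5` every binary cyclic word is fixed by a
reflection, while the word `0 1 2 2 … 2` works for every `n`; one label never suffices.
-/

lemma Fin.two_ne_zero_of_add_three {n : ℕ} : (2 : Fin (n + 3)) ≠ 0 := by
  simp (disch := omega) [Fin.ext_iff, Nat.mod_eq_of_lt]

namespace SimpleGraph

variable {V α β : Type*}

def IsDistinguishingEdgeLabeling (G : SimpleGraph V) (f : Sym2 V → α) : Prop :=
  ∀ φ : G ≃g G, (∀ e ∈ G.edgeSet, f (Sym2.map φ e) = f e) → ∀ v, φ v = v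

lemma IsDistinguishingEdgeLabeling.comp {G : SimpleGraph V} {f : Sym2 V → α}
    (hf : G.IsDistinguishingEdgeLabeling f) {g : α → β} (hg : Function.Injective g) :
    G.IsDistinguishingEdgeLabeling (g ∘ f) :=
  fun φ hφ => hf φ fun e he => hg (hφ e he)

lemma distinguishingIndex_eq_succ {G : SimpleGraph V} {d : ℕ}
    (h : ∃ f : Sym2 V → Fin (d + 1), G.IsDistinguishingEdgeLabeling f)
    (h' : ¬∃ f : Sym2 V → Fin d, G.IsDistinguishingEdgeLabeling f) :
    distinguishingIndex G = d + 1 := by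
  refine le_antisymm (Nat.sInf_le h) (le_csInf ⟨_, h⟩ ?_)
  rintro k ⟨f, hf⟩
  by_contra! hk
  exact h' ⟨Fin.castLE (by omega) ∘ f,
    IsDistinguishingEdgeLabeling.comp hf (Fin.castLE_injective _)⟩

section Cycle

open Fin.CommRing

variable {n : ℕ}

lemma cycleGraph_adj_iff_sub_eq {u v : Fin (n + 2)} :
    (cycleGraph (n + 2)).Adj u v ↔ v - u = 1 ∨ v - u = -1 := by
  rw [cycleGraph_adj, or_comm, ← neg_sub v u, neg_eq_iff_eq_neg]

lemma cycleGraph_adj_add_one (v : Fin (n + 2)) : (cycleGraph (n + 2)).Adj v (v + 1) :=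
  cycleGraph_adj_iff_sub_eq.2 (.inl (add_sub_cancel_left v 1))

lemma exists_eq_mk_add_one_of_mem_edgeSet_cycleGraph {e : Sym2 (Fin (n + 2))}
    (he : e ∈ (cycleGraph (n + 2)).edgeSet) : ∃ i, e = s(i, i + 1) := by
  induction e using Sym2.inductionOn with
  | hf u v =>
    rw [mem_edgeSet, cycleGraph_adj_iff_sub_eq] at he
    rcases he with h | h
    · obtain rfl : v = u + 1 := by linear_combination h
      exact ⟨u, rfl⟩
    · obtain rfl : u = v + 1 := by linear_combination -h
      exact ⟨v, Sym2.eq_swap⟩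

lemma cycleGraph_iso_apply_add_one_sub_apply (φ : cycleGraph (n + 3) ≃g cycleGraph (n + 3))
    (v : Fin (n + 3)) : φ (v + 1) - φ v = φ 1 - φ 0 := by
  suffices ∀ k : ℕ, φ (k + 1) - φ k = φ 1 - φ 0 by simpa using this v
  intro k
  induction k with
  | zero => simp
  | succ k ih =>
    push_cast
    have hstep (x : Fin (n + 3)) : φ (x + 1) - φ x = 1 ∨ φ (x + 1) - φ x = -1 :=
      cycleGraph_adj_iff_sub_eq.1 (φ.map_adj_iff.2 (cycleGraph_adj_add_one x))
    -- a step back would revisit `φ k`, but `k + 2 ≠ k`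
    have hback : φ (k + 1 + 1) - φ (k + 1) + (φ (k + 1) - φ k) ≠ 0 := by
      rw [sub_add_sub_cancel, sub_ne_zero, φ.injective.ne_iff, add_assoc, Ne, add_eq_left,
        one_add_one_eq_two]
      exact Fin.two_ne_zero_of_add_three
    rw [← ih]
    have hb := hstep (k + 1)
    have ha := hstep k
    generalize φ (k + 1 + 1) - φ (k + 1) = b at hb hback ⊢
    generalize φ (k + 1) - φ k = a at ha hback ⊢
    rcases hb with rfl | rfl <;> rcases ha with rfl | rfl <;> simp at hback ⊢

theorem cycleGraph_iso_eq_add_or_eq_sub (φ : cycleGraph (n + 3) ≃g cycleGraph (n + 3)) :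
    (∀ v, φ v = φ 0 + v) ∨ (∀ v, φ v = φ 0 - v) := by
  have hlin (v : Fin (n + 3)) : φ v = φ 0 + v * (φ 1 - φ 0) := by
    suffices ∀ k : ℕ, φ k = φ 0 + k * (φ 1 - φ 0) by simpa using this v
    intro k
    induction k with
    | zero => simp
    | succ k ih =>
      push_cast
      linear_combination cycleGraph_iso_apply_add_one_sub_apply φ k + ih
  have h01 := φ.map_adj_iff.2 (cycleGraph_adj_add_one (0 : Fin (n + 3)))
  rw [zero_add, cycleGraph_adj_iff_sub_eq] at h01
  refine h01.imp (fun h v => ?_) (fun h v => ?_) <;> rw [hlin v, h] <;> ring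

def cycleGraph.reflection (a : Fin (n + 2)) : cycleGraph (n + 2) ≃g cycleGraph (n + 2) where
  toEquiv := Equiv.subLeft a
  map_rel_iff' {u v} := by
    simp only [Equiv.subLeft_apply, cycleGraph_adj, sub_sub_sub_cancel_left, or_comm]

@[simp]
lemma cycleGraph.reflection_apply (a v : Fin (n + 2)) : cycleGraph.reflection a v = a - v := rfl

lemma not_isDistinguishingEdgeLabeling_of_forall_sub {f : Sym2 (Fin (n + 3)) → α}
    (a : Fin (n + 3)) (h : ∀ i, f s(a - i, a - i + 1) = f s(i, i + 1)) :
    ¬(cycleGraph (n + 3)).IsDistinguishingEdgeLabeling f := by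
  intro hf
  have hfix := hf (cycleGraph.reflection (a + 1)) fun e he => by
    obtain ⟨i, rfl⟩ := exists_eq_mk_add_one_of_mem_edgeSet_cycleGraph he
    rw [← h i, Sym2.map_mk, Sym2.eq_swap]
    congr 2 <;> rw [cycleGraph.reflection_apply] <;> ring
  have h0 : a + 1 = 0 := by simpa using hfix 0
  have h1 : a = 1 := by simpa using hfix 1
  exact Fin.two_ne_zero_of_add_three (by rw [← h0, h1]; rfl)

def cycleEdgeLabeling (c : Fin (n + 3) → α) : Sym2 (Fin (n + 3)) → α :=
  Sym2.lift ⟨fun x y => if y = x + 1 then c x else if x = y + 1 then c y else c 0, fun x y => by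
    by_cases hyx : y = x + 1
    · subst hyx
      have hxy : x ≠ x + 1 + 1 := fun hxy ↦
        Fin.two_ne_zero_of_add_three (by linear_combination -hxy)
      simp [hxy]
    · simp [hyx]⟩

@[simp]
lemma cycleEdgeLabeling_mk_add_one (c : Fin (n + 3) → α) (i : Fin (n + 3)) :
    cycleEdgeLabeling c s(i, i + 1) = c i := by
  simp [cycleEdgeLabeling]

lemma isDistinguishingEdgeLabeling_cycleEdgeLabeling {c : Fin (n + 3) → α}
    (hrot : ∀ a, (∀ i, c (a + i) = c i) → a = 0) (hrefl : ∀ a, ¬∀ i, c (a - i) = c i) :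
    (cycleGraph (n + 3)).IsDistinguishingEdgeLabeling (cycleEdgeLabeling c) := by
  intro φ hφ
  have hc (i : Fin (n + 3)) : cycleEdgeLabeling c s(φ i, φ (i + 1)) = c i := by
    rw [← Sym2.map_mk, hφ _ (cycleGraph_adj_add_one i), cycleEdgeLabeling_mk_add_one]
  rcases cycleGraph_iso_eq_add_or_eq_sub φ with hφ' | hφ'
  · have h0 : φ 0 = 0 := hrot _ fun i => by
      rw [← hc i, hφ' i, hφ' (i + 1), ← add_assoc, cycleEdgeLabeling_mk_add_one]
    simpa [h0] using hφ'
  · refine (hrefl (φ 0 - 1) fun i => ?_).elim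
    rw [← hc i, hφ' i, hφ' (i + 1), Sym2.eq_swap, show φ 0 - i = φ 0 - 1 - i + 1 by ring,
      show φ 0 - (i + 1) = φ 0 - 1 - i by ring, cycleEdgeLabeling_mk_add_one]

lemma exists_forall_apply_sub_eq_of_le_two {m : ℕ} (hm : m ≤ 2) (c : Fin (m + 3) → Fin 2) :
    ∃ a, ∀ i, c (a - i) = c i := by
  interval_cases m <;> revert c <;> decide

lemma exists_isDistinguishingEdgeLabeling_fin_three (n : ℕ) :
    ∃ f : Sym2 (Fin (n + 3)) → Fin 3, (cycleGraph (n + 3)).IsDistinguishingEdgeLabeling f := by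
  let c : Fin (n + 3) → Fin 3 := fun i => if i = 0 then 0 else if i = 1 then 1 else 2
  refine ⟨cycleEdgeLabeling c,
    isDistinguishingEdgeLabeling_cycleEdgeLabeling (fun a ha => ?_) (fun a ha => ?_)⟩
  · simpa [c, ite_eq_iff] using ha 0
  · obtain rfl : a = 0 := by simpa [c, ite_eq_iff] using ha 0
    have h1 := ha 1
    simp [c] at h1
    exact Fin.two_ne_zero_of_add_three (by linear_combination -h1)

lemma exists_isDistinguishingEdgeLabeling_fin_two (n : ℕ) :
    ∃ f : Sym2 (Fin (n + 6)) → Fin 2, (cycleGraph (n + 6)).IsDistinguishingEdgeLabeling f := by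
  let c : Fin (n + 6) → Fin 2 := fun i => if i = 0 ∨ i = 1 ∨ i = 3 then 1 else 0
  have hmem {x i : Fin (n + 6)} (hi : i = 0 ∨ i = 1 ∨ i = 3) (hxi : c x = c i) :
      x = 0 ∨ x = 1 ∨ x = 3 := by
    by_contra hx
    simp [c, hi, hx] at hxi
  refine ⟨cycleEdgeLabeling c, isDistinguishingEdgeLabeling_cycleEdgeLabeling (n := n + 3)
    (fun a ha => ?_) (fun a ha => ?_)⟩
  · have h0 := hmem (by simp) (ha 0)
    have h1 := hmem (by simp) (ha 1)
    rw [add_zero] at h0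
    rcases h0 with rfl | rfl | rfl
    · rfl
    all_goals simp (disch := omega) [Fin.ext_iff, Fin.val_add, Nat.mod_eq_of_lt] at h1
  · have h0 := hmem (by simp) (ha 0)
    have h1 := hmem (by simp) (ha 1)
    have h3 := hmem (by simp) (ha 3)
    rw [sub_zero] at h0
    rcases h0 with rfl | rfl | rfl
    all_goals
      simp (disch := omega) [Fin.ext_iff, Fin.sub_def, Nat.mod_eq_of_lt, Nat.mod_eq_sub_mod]
        at h1 h3

end Cycle

end SimpleGraph

theorem distinguishingIndex_cycleGraph (n : ℕ) :
    (6 ≤ n → distinguishingIndex (cycleGraph n) = 2) ∧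
      (3 ≤ n → n ≤ 5 → distinguishingIndex (cycleGraph n) = 3) := by
  refine ⟨fun hn => ?_, fun hn3 hn5 => ?_⟩
  · obtain ⟨m, rfl⟩ : ∃ m, n = m + 6 := ⟨n - 6, by omega⟩
    refine distinguishingIndex_eq_succ (exists_isDistinguishingEdgeLabeling_fin_two m) ?_
    rintro ⟨f, hf⟩
    exact not_isDistinguishingEdgeLabeling_of_forall_sub (n := m + 3) 0
      (fun _ => Subsingleton.elim _ _) hf
  · obtain ⟨m, rfl⟩ : ∃ m, n = m + 3 := ⟨n - 3, by omega⟩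
    refine distinguishingIndex_eq_succ (exists_isDistinguishingEdgeLabeling_fin_three m) ?_
    rintro ⟨f, hf⟩
    obtain ⟨a, ha⟩ := exists_forall_apply_sub_eq_of_le_two (by omega) fun i => f s(i, i + 1)
    exact not_isDistinguishingEdgeLabeling_of_forall_sub a ha hf
end

section
/- For n ≥ 6, the distinguishing index of the complete graph K_n equals 2, and for n ∈ {3,4,5} it equals 3. -/
set_option maxRecDepth 400000
set_option maxHeartbeats 12000000

open SimpleGraph

/-! ### Auxiliary machinery -/

/-- The relevant property: there is a distinguishing edge labeling with `d` labels
of the complete graph on `V`. -/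
def EdgeDist (V : Type*) (d : ℕ) : Prop :=
  ∃ f : Sym2 V → Fin d,
    ∀ φ : (⊤ : SimpleGraph V) ≃g (⊤ : SimpleGraph V),
      (∀ e ∈ (⊤ : SimpleGraph V).edgeSet, f (Sym2.map ⇑φ e) = f e) → ∀ v, φ v = v

lemma distinguishingIndex_top_eq {V : Type*} (k : ℕ) (hk : EdgeDist V k)
    (hlt : ∀ m < k, ¬ EdgeDist V m) : distinguishingIndex (⊤ : SimpleGraph V) = k := by
  have hk' : k ∈ {d : ℕ | ∃ f : Sym2 V → Fin d,
      ∀ φ : (⊤ : SimpleGraph V) ≃g (⊤ : SimpleGraph V),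
        (∀ e ∈ (⊤ : SimpleGraph V).edgeSet, f (Sym2.map ⇑φ e) = f e) → ∀ v, φ v = v} := hk
  exact le_antisymm (Nat.sInf_le hk')
    (le_csInf ⟨k, hk'⟩ fun b hb => not_lt.1 fun hbk => hlt b hbk hb)

/-- Any equivalence is an automorphism of the complete graph. -/
def topIso {V : Type*} (e : V ≃ V) : (⊤ : SimpleGraph V) ≃g (⊤ : SimpleGraph V) :=
  ⟨e, by intro a b; simp⟩

lemma topIso_apply {V : Type*} (e : V ≃ V) (v : V) : (topIso e) v = e v := rfl

lemma not_edgeDist_zero {V : Type*} (v : V) : ¬ EdgeDist V 0 := by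
  rintro ⟨f, -⟩
  exact (f s(v, v)).elim0

lemma not_edgeDist_one {V : Type*} [DecidableEq V] (a b : V) (hab : a ≠ b) :
    ¬ EdgeDist V 1 := by
  rintro ⟨f, hf⟩
  have := hf (topIso (Equiv.swap a b)) (fun e _ => Subsingleton.elim _ _) a
  rw [topIso_apply, Equiv.swap_apply_left] at this
  exact hab this.symm

/-- A symmetric rigid labeling gives membership. -/
lemma edgeDist_of_rigid {n d : ℕ} (c : Fin n → Fin n → Fin d)
    (hs : ∀ a b, c a b = c b a)
    (hr : ∀ σ : Equiv.Perm (Fin n),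
      (∀ a b, a ≠ b → c (σ a) (σ b) = c a b) → ∀ x, σ x = x) :
    EdgeDist (Fin n) d := by
  refine ⟨Sym2.lift ⟨c, hs⟩, fun φ h v => ?_⟩
  refine hr φ.toEquiv (fun a b hab => ?_) v
  have := h s(a, b) (by simp [hab])
  simpa using this

/-! ### The rigid graph for `n ≥ 6` -/

def E6 : List (ℕ × ℕ) := [(0,1),(0,2),(0,3),(1,2),(1,4),(3,5)]

def base6 : ℕ → ℕ → Bool := fun i j => decide ((i, j) ∈ E6) || decide ((j, i) ∈ E6)

def adjF : ℕ → ℕ → Bool := fun i j =>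
  if i = j then false
  else if i < 6 ∧ j < 6 then base6 i j
  else decide (max i j % 2 = 0)

lemma base6_comm (i j : ℕ) : base6 i j = base6 j i := by
  simp only [base6]; rw [Bool.or_comm]

lemma adjF_diag (i : ℕ) : adjF i i = false := by simp [adjF]

lemma adjF_comm (i j : ℕ) : adjF i j = adjF j i := by
  simp only [adjF]
  by_cases h : i = j
  · simp [h]
  · rw [if_neg h, if_neg (Ne.symm h)]
    by_cases h2 : i < 6 ∧ j < 6
    · rw [if_pos h2, if_pos ⟨h2.2, h2.1⟩, base6_comm]
    · rw [if_neg h2, if_neg (fun hh => h2 ⟨hh.2, hh.1⟩), max_comm]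

lemma adjF_hi {i j : ℕ} (h6 : 6 ≤ i ∨ 6 ≤ j) (hij : i ≠ j) :
    adjF i j = decide (max i j % 2 = 0) := by
  simp only [adjF]
  rw [if_neg hij, if_neg (by omega)]

lemma adjF_lo {i j : ℕ} (hi : i < 6) (hj : j < 6) (hij : i ≠ j) :
    adjF i j = base6 i j := by
  simp only [adjF]
  rw [if_neg hij, if_pos ⟨hi, hj⟩]

lemma base_rigid : ∀ σ : Equiv.Perm (Fin 6),
    (∀ a b, adjF (σ a).val (σ b).val = adjF a.val b.val) → ∀ v, σ v = v := by decide

lemma no_dom6 : ∀ v : Fin 6, ∃ x : Fin 6, x ≠ v ∧ base6 v.val x.val = false := by decide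

lemma rigidAux : ∀ (m : ℕ) (g : Fin (m + 6) → Fin (m + 6)), Function.Injective g →
    (∀ a b, adjF (g a).val (g b).val = adjF a.val b.val) → ∀ v, g v = v := by
  intro m
  induction m with
  | zero =>
    intro g hg hp v
    have hb : Function.Bijective g := Finite.injective_iff_bijective.1 hg
    exact base_rigid (Equiv.ofBijective g hb) hp v
  | succ m ih =>
    intro g hg hp
    have hsurj : Function.Surjective g := Finite.injective_iff_surjective.1 hg
    set last : Fin (m + 7) := ⟨m + 6, by omega⟩ with hlast
    have hglast : g last = last := by
      by_contra hne
      have hult : (g last).val < m + 6 := by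
        have h1 : (g last).val < m + 7 := (g last).isLt
        have h2 : (g last).val ≠ m + 6 := fun h => hne (Fin.ext h)
        omega
      -- adjacency of `g last` to everything else mirrors adjacency of `m+6`
      have key : ∀ yv : ℕ, yv < m + 7 → yv ≠ (g last).val →
          ∃ x : ℕ, x < m + 6 ∧ adjF (g last).val yv = adjF (m + 6) x := by
        intro yv hyv hyne
        obtain ⟨x, hx⟩ := hsurj ⟨yv, hyv⟩
        have hxval : (g x).val = yv := by rw [hx]
        have hxne : x.val ≠ m + 6 := by
          intro h
          have : x = last := Fin.ext h
          rw [this] at hxval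
          exact hyne hxval.symm
        refine ⟨x.val, by have := x.isLt; omega, ?_⟩
        rw [← hxval]
        exact hp last x
      rcases Nat.mod_two_eq_zero_or_one (m + 6) with hev | hod
      · -- m+6 even : m+6 is dominating, so g last would be dominating too
        have adjTop : ∀ t : ℕ, t < m + 6 → adjF (m + 6) t = true := by
          intro t ht
          rw [adjF_hi (Or.inl (by omega)) (by omega)]
          simp only [decide_eq_true_eq]
          omega
        rcases Nat.eq_zero_or_pos m with rfl | hm
        · -- m = 0 : g last has value < 6, use that base6 has no dominating vertex
          obtain ⟨x, hxne, hxf⟩ := no_dom6 ⟨(g last).val, hult⟩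
          have hxv : x.val ≠ (g last).val := by
            intro h
            exact hxne (Fin.ext h)
          obtain ⟨z, hz, hadj⟩ := key x.val (by have := x.isLt; omega) hxv
          rw [adjTop z hz, adjF_lo hult x.isLt (Ne.symm hxv)] at hadj
          rw [hxf] at hadj
          exact Bool.false_ne_true hadj
        · -- m ≥ 1 : m+5 ≥ 6 is odd hence a non-neighbor exists
          by_cases hu : (g last).val = m + 5
          · obtain ⟨z, hz, hadj⟩ := key 0 (by omega) (by omega)
            rw [adjTop z hz, hu, adjF_hi (Or.inl (by omega)) (by omega)] at hadj
            simp only [decide_eq_true_eq] at hadj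
            omega
          · obtain ⟨z, hz, hadj⟩ := key (m + 5) (by omega) (by omega)
            rw [adjTop z hz, adjF_hi (Or.inr (by omega)) (by omega)] at hadj
            simp only [decide_eq_true_eq] at hadj
            omega
      · -- m+6 odd : m+6 is isolated, so g last would be isolated too
        have hm : 1 ≤ m := by omega
        have adjTop : ∀ t : ℕ, t < m + 6 → adjF (m + 6) t = false := by
          intro t ht
          rw [adjF_hi (Or.inl (by omega)) (by omega)]
          simp only [decide_eq_false_iff_not]
          omega
        by_cases hu : (g last).val = m + 5
        · obtain ⟨z, hz, hadj⟩ := key 0 (by omega) (by omega)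
          rw [adjTop z hz, hu, adjF_hi (Or.inl (by omega)) (by omega)] at hadj
          simp only [decide_eq_false_iff_not] at hadj
          omega
        · obtain ⟨z, hz, hadj⟩ := key (m + 5) (by omega) (by omega)
          rw [adjTop z hz, adjF_hi (Or.inr (by omega)) (by omega)] at hadj
          simp only [decide_eq_false_iff_not] at hadj
          omega
    -- restrict to `Fin (m+6)`
    have hlt' : ∀ x : Fin (m + 6), (g x.castSucc).val < m + 6 := by
      intro x
      have h1 : (g x.castSucc).val < m + 7 := (g x.castSucc).isLt
      have h2 : (g x.castSucc).val ≠ m + 6 := by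
        intro h
        have hx1 : g x.castSucc = g last := by
          rw [hglast]; exact Fin.ext h
        have hx2 := hg hx1
        have hx3 : (x.castSucc : Fin (m + 7)).val = (last : Fin (m + 7)).val :=
          congrArg Fin.val hx2
        have := x.isLt
        simp [Fin.castSucc, hlast] at hx3
        omega
      omega
    have hfix : ∀ x : Fin (m + 6), (⟨(g x.castSucc).val, hlt' x⟩ : Fin (m + 6)) = x := by
      apply ih (fun x => ⟨(g x.castSucc).val, hlt' x⟩)
      · intro a b hab
        have hab' : (⟨(g a.castSucc).val, hlt' a⟩ : Fin (m + 6))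
            = ⟨(g b.castSucc).val, hlt' b⟩ := hab
        simp only [Fin.mk.injEq] at hab'
        exact Fin.castSucc_injective _ (hg (Fin.ext hab'))
      · intro a b
        exact hp a.castSucc b.castSucc
    intro v
    by_cases hv : v.val = m + 6
    · have : v = last := Fin.ext hv
      rw [this, hglast]
    · have hvlt : v.val < m + 6 := by have := v.isLt; omega
      have h1 : (⟨(g (⟨v.val, hvlt⟩ : Fin (m + 6)).castSucc).val, hlt' _⟩ : Fin (m + 6))
          = ⟨v.val, hvlt⟩ := hfix ⟨v.val, hvlt⟩
      simp only [Fin.mk.injEq] at h1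
      have h3 : (⟨v.val, hvlt⟩ : Fin (m + 6)).castSucc = v := Fin.ext rfl
      rw [h3] at h1
      exact Fin.ext h1

/-! ### Small cases: data -/

def pidxF3 : Fin 3 → Fin 3 → Fin 3 := ![![0,0,1],![0,0,2],![1,2,0]]
def pA3 : Fin 3 → Fin 3 := ![0,0,1]
def pB3 : Fin 3 → Fin 3 := ![1,2,2]
def inv3 : Fin 3 → (Fin 3 → Fin 3) := ![![0,2,1],![1,0,2],![2,1,0]]
def w3 : Fin 3 → Fin 3 := ![0,1,2]

def pidxF4 : Fin 4 → Fin 4 → Fin 6 :=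
  ![![0,0,1,3],![0,0,2,4],![1,2,0,5],![3,4,5,0]]
def pA4 : Fin 6 → Fin 4 := ![0,0,1,0,1,2]
def pB4 : Fin 6 → Fin 4 := ![1,2,2,3,3,3]
def inv4 : Fin 9 → (Fin 4 → Fin 4) :=
  ![![0,1,3,2],![0,2,1,3],![0,3,2,1],![1,0,2,3],![1,0,3,2],![2,1,0,3],![2,3,0,1],
    ![3,1,2,0],![3,2,1,0]]
def w4 : Fin 6 → Fin 3 := ![0,0,0,0,1,2]

def pidxF5 : Fin 5 → Fin 5 → Fin 10 :=
  ![![0,0,1,3,6],![0,0,2,4,7],![1,2,0,5,8],![3,4,5,0,9],![6,7,8,9,0]]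
def pA5 : Fin 10 → Fin 5 := ![0,0,1,0,1,2,0,1,2,3]
def pB5 : Fin 10 → Fin 5 := ![1,2,2,3,3,3,4,4,4,4]
def inv5 : Fin 25 → (Fin 5 → Fin 5) :=
  ![![0, 1, 2, 4, 3], ![0, 1, 3, 2, 4], ![0, 1, 4, 3, 2], ![0, 2, 1, 3, 4], ![0, 3, 2, 1, 4],
    ![0, 4, 2, 3, 1], ![1, 0, 2, 3, 4], ![2, 1, 0, 3, 4], ![3, 1, 2, 0, 4], ![4, 1, 2, 3, 0],
    ![0, 2, 1, 4, 3], ![0, 3, 4, 1, 2], ![0, 4, 3, 2, 1], ![1, 0, 2, 4, 3], ![1, 0, 3, 2, 4],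
    ![1, 0, 4, 3, 2], ![2, 1, 0, 4, 3], ![2, 3, 0, 1, 4], ![2, 4, 0, 3, 1], ![3, 1, 4, 0, 2],
    ![3, 2, 1, 0, 4], ![3, 4, 2, 0, 1], ![4, 1, 3, 2, 0], ![4, 2, 1, 3, 0], ![4, 3, 2, 1, 0]]
def w5 : Fin 10 → Fin 3 := ![0,0,0,0,0,1,0,1,1,2]

/-! ### Small cases: decidable facts -/

lemma c3_rigid : ∀ σ : Equiv.Perm (Fin 3),
    (∀ a b, a ≠ b → w3 (pidxF3 (σ a) (σ b)) = w3 (pidxF3 a b)) → ∀ x, σ x = x := by decide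

lemma c4_rigid : ∀ σ : Equiv.Perm (Fin 4),
    (∀ a b, a ≠ b → w4 (pidxF4 (σ a) (σ b)) = w4 (pidxF4 a b)) → ∀ x, σ x = x := by decide

lemma c5_rigid : ∀ σ : Equiv.Perm (Fin 5),
    (∀ a b, a ≠ b → w5 (pidxF5 (σ a) (σ b)) = w5 (pidxF5 a b)) → ∀ x, σ x = x := by decide

lemma two_not3 : ∀ w : Fin 3 → Bool, ∃ k : Fin 3, ∀ i : Fin 3,
    w (pidxF3 (inv3 k (pA3 i)) (inv3 k (pB3 i))) = w i := by decide

lemma two_not4 : ∀ w : Fin 6 → Bool, ∃ k : Fin 9, ∀ i : Fin 6,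
    w (pidxF4 (inv4 k (pA4 i)) (inv4 k (pB4 i))) = w i := by decide

lemma two_not5' : ∀ b0 b1 b2 b3 b4 b5 b6 b7 b8 b9 : Bool, ∃ k : Fin 25, ∀ i : Fin 10,
    ![b0,b1,b2,b3,b4,b5,b6,b7,b8,b9] (pidxF5 (inv5 k (pA5 i)) (inv5 k (pB5 i)))
      = ![b0,b1,b2,b3,b4,b5,b6,b7,b8,b9] i := by decide

lemma two_not5 : ∀ w : Fin 10 → Bool, ∃ k : Fin 25, ∀ i : Fin 10,
    w (pidxF5 (inv5 k (pA5 i)) (inv5 k (pB5 i))) = w i := by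
  intro w
  have h := two_not5' (w 0) (w 1) (w 2) (w 3) (w 4) (w 5) (w 6) (w 7) (w 8) (w 9)
  have hw : ![w 0, w 1, w 2, w 3, w 4, w 5, w 6, w 7, w 8, w 9] = w := by
    funext i; fin_cases i <;> rfl
  rwa [hw] at h

lemma inv3_invol : ∀ k x, inv3 k (inv3 k x) = x := by decide
lemma inv4_invol : ∀ k x, inv4 k (inv4 k x) = x := by decide
lemma inv5_invol : ∀ k x, inv5 k (inv5 k x) = x := by decide
lemma inv3_ne : ∀ k, ∃ x, inv3 k x ≠ x := by decide
lemma inv4_ne : ∀ k, ∃ x, inv4 k x ≠ x := by decide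
lemma inv5_ne : ∀ k, ∃ x, inv5 k x ≠ x := by decide
lemma pidx3_symm : ∀ a b, pidxF3 a b = pidxF3 b a := by decide
lemma pidx4_symm : ∀ a b, pidxF4 a b = pidxF4 b a := by decide
lemma pidx5_symm : ∀ a b, pidxF5 a b = pidxF5 b a := by decide
lemma pairid3 : ∀ a b : Fin 3, a ≠ b →
    s(pA3 (pidxF3 a b), pB3 (pidxF3 a b)) = s(a, b) := by decide
lemma pairid4 : ∀ a b : Fin 4, a ≠ b →
    s(pA4 (pidxF4 a b), pB4 (pidxF4 a b)) = s(a, b) := by decide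
lemma pairid5 : ∀ a b : Fin 5, a ≠ b →
    s(pA5 (pidxF5 a b), pB5 (pidxF5 a b)) = s(a, b) := by decide
lemma rep3 : ∀ a b : Fin 3, a ≠ b →
    ∃ i, (pA3 i = a ∧ pB3 i = b) ∨ (pA3 i = b ∧ pB3 i = a) := by decide
lemma rep4 : ∀ a b : Fin 4, a ≠ b →
    ∃ i, (pA4 i = a ∧ pB4 i = b) ∨ (pA4 i = b ∧ pB4 i = a) := by decide
lemma rep5 : ∀ a b : Fin 5, a ≠ b →
    ∃ i, (pA5 i = a ∧ pB5 i = b) ∨ (pA5 i = b ∧ pB5 i = a) := by decide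

/-- Generic: no 2-label distinguishing edge-labeling exists. -/
lemma not_edgeDist_two {n K N : ℕ}
    (pidx : Fin n → Fin n → Fin K) (pA pB : Fin K → Fin n)
    (inv : Fin N → (Fin n → Fin n))
    (hpair : ∀ a b : Fin n, a ≠ b → s(pA (pidx a b), pB (pidx a b)) = s(a, b))
    (hrep : ∀ a b : Fin n, a ≠ b → ∃ i, (pA i = a ∧ pB i = b) ∨ (pA i = b ∧ pB i = a))
    (hinv : ∀ k x, inv k (inv k x) = x)
    (hne : ∀ k, ∃ x, inv k x ≠ x)
    (hmain : ∀ w : Fin K → Bool, ∃ k, ∀ i : Fin K,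
      w (pidx (inv k (pA i)) (inv k (pB i))) = w i) :
    ¬ EdgeDist (Fin n) 2 := by
  rintro ⟨f, hf⟩
  obtain ⟨k, hk⟩ := hmain (fun i => decide (f s(pA i, pB i) = 1))
  have hinj : Function.Injective (inv k) := by
    intro x y h
    have := congrArg (inv k) h
    rwa [hinv, hinv] at this
  have hAB : ∀ a b : Fin n, a ≠ b → f s(inv k a, inv k b) = f s(a, b) := by
    intro a b hab
    have habk : inv k a ≠ inv k b := fun h => hab (hinj h)
    have hdec : ∀ x y : Fin 2, decide (x = 1) = decide (y = 1) → x = y := by decide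
    apply hdec
    obtain ⟨i, hi⟩ := hrep a b hab
    rcases hi with ⟨h1, h2⟩ | ⟨h1, h2⟩
    · have hki := hk i
      simp only [h1, h2] at hki
      rw [hpair _ _ habk] at hki
      exact hki
    · have hki := hk i
      simp only [h1, h2] at hki
      rw [hpair _ _ (fun h => (Ne.symm hab) (hinj h))] at hki
      rw [show s(inv k a, inv k b) = s(inv k b, inv k a) from Sym2.eq_swap,
        show s(a, b) = s(b, a) from Sym2.eq_swap]
      exact hki
  obtain ⟨x, hx⟩ := hne k
  apply hx
  have hmm := hf (topIso ⟨inv k, inv k, fun x => hinv k x, fun x => hinv k x⟩) ?_ x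
  · exact hmm
  · intro e he
    induction e using Sym2.ind with
    | _ a b =>
      rw [SimpleGraph.mem_edgeSet] at he
      have hab : a ≠ b := by
        intro h
        rw [h] at he
        exact (SimpleGraph.irrefl _) he
      have hmap : Sym2.map (⇑(topIso ⟨inv k, inv k, fun x => hinv k x, fun x => hinv k x⟩))
          s(a, b) = s(inv k a, inv k b) := by
        rw [Sym2.map_pair_eq]
        rfl
      rw [hmap]
      exact hAB a b hab

/-! ### The main theorem -/

theorem distinguishingIndex_completeGraph (n : ℕ) :
    (6 ≤ n → distinguishingIndex (⊤ : SimpleGraph (Fin n)) = 2) ∧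
      (3 ≤ n → n ≤ 5 → distinguishingIndex (⊤ : SimpleGraph (Fin n)) = 3) := by
  constructor
  · intro h6
    obtain ⟨m, rfl⟩ : ∃ m, n = m + 6 := ⟨n - 6, by omega⟩
    apply distinguishingIndex_top_eq
    · -- 2 labels suffice
      refine edgeDist_of_rigid (fun a b => if adjF a.val b.val then 1 else 0)
        (fun a b => by simp only [adjF_comm a.val b.val]) ?_
      intro σ hσ
      apply rigidAux m σ σ.injective
      intro a b
      by_cases hab : a = b
      · subst hab
        rw [adjF_diag, adjF_diag]
      · have h1 := hσ a b hab
        have h2 : ∀ p q : Bool,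
            ((if p then (1 : Fin 2) else 0) = (if q then 1 else 0)) → p = q := by decide
        exact h2 _ _ h1
    · intro k hk
      interval_cases k
      · exact not_edgeDist_zero (0 : Fin (m + 6))
      · refine not_edgeDist_one (0 : Fin (m + 6)) 1 ?_
        intro h
        have := congrArg Fin.val h
        simp [Fin.val_one] at this
  · intro h3 h5
    interval_cases n
    · apply distinguishingIndex_top_eq
      · exact edgeDist_of_rigid (fun a b => w3 (pidxF3 a b))
          (fun a b => by simp only [pidx3_symm a b]) c3_rigid
      · intro k hk
        interval_cases k
        · exact not_edgeDist_zero (0 : Fin 3)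
        · exact not_edgeDist_one (0 : Fin 3) 1 (by decide)
        · exact not_edgeDist_two pidxF3 pA3 pB3 inv3 pairid3 rep3 inv3_invol
            inv3_ne two_not3
    · apply distinguishingIndex_top_eq
      · exact edgeDist_of_rigid (fun a b => w4 (pidxF4 a b))
          (fun a b => by simp only [pidx4_symm a b]) c4_rigid
      · intro k hk
        interval_cases k
        · exact not_edgeDist_zero (0 : Fin 4)
        · exact not_edgeDist_one (0 : Fin 4) 1 (by decide)
        · exact not_edgeDist_two pidxF4 pA4 pB4 inv4 pairid4 rep4 inv4_invol
            inv4_ne two_not4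
    · apply distinguishingIndex_top_eq
      · exact edgeDist_of_rigid (fun a b => w5 (pidxF5 a b))
          (fun a b => by simp only [pidx5_symm a b]) c5_rigid
      · intro k hk
        interval_cases k
        · exact not_edgeDist_zero (0 : Fin 5)
        · exact not_edgeDist_one (0 : Fin 5) 1 (by decide)
        · exact not_edgeDist_two pidxF5 pA5 pB5 inv5 pairid5 rep5 inv5_invol
            inv5_ne two_not5
end

section
/- For every n ≥ 2, the distinguishing index of the friendship graph D_n^3 equals the minimum integer r such that (r^3 - r^2)/2 ≥ n. -/
open SimpleGraph

/-!
For `n ≥ 2` the centre is the only vertex adjacent to all others, so every automorphism of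
`D_n^3` fixes it; hence automorphisms are exactly the permutations of the triangles combined with
swaps of the two outer vertices inside triangles. An edge labeling is therefore distinguishing
iff in every triangle the two spokes carry different labels and no two triangles have the same
type (unordered pair of spoke labels, rim label). With `r` labels there are
`C(r, 2) * r = (r ^ 3 - r ^ 2) / 2` such types.
-/

open Function Equiv

def SimpleGraph.IsDistinguishingEdgeLabeling_s16 {V α : Type*} (G : SimpleGraph V)
    (f : Sym2 V → α) : Prop :=
  ∀ φ : G ≃g G, (∀ e ∈ G.edgeSet, f (Sym2.map ⇑φ e) = f e) → ∀ v, φ v = v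

section FinTwo

variable {β : Type*}

lemma sym2_mk_fin_two_of_ne (g : Fin 2 → β) {j j' : Fin 2} (h : j ≠ j') :
    s(g j, g j') = s(g 0, g 1) := by
  fin_cases j <;> fin_cases j' <;> simp_all [Sym2.eq_swap]

lemma injective_fin_two_of_ne {g : Fin 2 → β} (h : g 0 ≠ g 1) : Injective g := by
  intro j j'
  fin_cases j <;> fin_cases j' <;> simp_all [eq_comm]

lemma exists_perm_fin_two_of_sym2_eq {u v : Fin 2 → β} (h : s(u 0, u 1) = s(v 0, v 1)) :
    ∃ σ : Perm (Fin 2), ∀ j, v (σ j) = u j := by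
  rcases Sym2.eq_iff.1 h with ⟨h0, h1⟩ | ⟨h0, h1⟩
  · exact ⟨1, Fin.forall_fin_two.2 ⟨h0.symm, h1.symm⟩⟩
  · exact ⟨swap 0 1, Fin.forall_fin_two.2 ⟨by simpa using h0.symm, by simpa using h1.symm⟩⟩

end FinTwo

lemma Nat.choose_two_mul_self (d : ℕ) : d.choose 2 * d = (d ^ 3 - d ^ 2) / 2 := by
  rw [Nat.choose_two_right, Nat.div_mul_right_comm (Nat.even_mul_pred_self d).two_dvd,
    Nat.mul_sub_one, Nat.sub_mul]
  ring_nf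

lemma Fintype.card_subtype_not_isDiag_fst {α β : Type*} [Fintype α] [DecidableEq α]
    [Fintype β] :
    Fintype.card {p : Sym2 α × β // ¬p.1.IsDiag} =
      (Fintype.card α).choose 2 * Fintype.card β := by
  rw [Fintype.card_congr (prodSubtypeFstEquivSubtypeProd (p := fun z : Sym2 α => ¬z.IsDiag)),
    Fintype.card_prod, Sym2.card_subtype_not_diag]

-- `windmill n 3` with the vertex type `Option (Fin n × Fin (3 - 1))` written as
-- `Option (Fin n × Fin 2)`, so that numerals and simp lemmas about `Fin 2` apply.
abbrev friendshipGraph (n : ℕ) : SimpleGraph (Option (Fin n × Fin 2)) := windmill n 3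

namespace friendshipGraph

variable {n : ℕ}

lemma adj_none_left {v : Option (Fin n × Fin 2)} :
    (friendshipGraph n).Adj none v ↔ v ≠ none := by
  rcases v with _ | ⟨i, j⟩
  · simp
  · simp only [windmill, fromRel_adj, ne_eq, reduceCtorEq, not_false_eq_true, true_and, iff_true]
    omega

lemma adj_some_some {x y : Fin n × Fin 2} :
    (friendshipGraph n).Adj (some x) (some y) ↔ x.1 = y.1 ∧ x ≠ y := by
  obtain ⟨i, j⟩ := x
  obtain ⟨i', j'⟩ := y
  simp only [windmill, fromRel_adj, ne_eq, Option.some.injEq, Prod.mk.injEq, Fin.ext_iff]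
  omega

lemma apply_none (hn : 2 ≤ n) (φ : friendshipGraph n ≃g friendshipGraph n) :
    φ none = none := by
  by_contra hne
  obtain ⟨⟨i, j⟩, hφ⟩ := Option.ne_none_iff_exists'.1 hne
  have : Nontrivial (Fin n) := Fin.nontrivial_iff_two_le.2 hn
  obtain ⟨i', hi'⟩ := exists_ne i
  set w : Option (Fin n × Fin 2) := some (i', 0)
  -- `none` is adjacent to every other vertex, so `φ none` must be too
  have hw : φ.symm w ≠ none := fun h =>
    hi' (congrArg Prod.fst (Option.some.inj ((φ.symm_apply_eq.1 h).trans hφ)))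
  have := φ.map_adj_iff.2 (adj_none_left.2 hw)
  rw [φ.apply_symm_apply, hφ, adj_some_some] at this
  exact hi' this.1.symm

def shearIso (σ : Perm (Fin n)) (τ : Fin n → Perm (Fin 2)) :
    friendshipGraph n ≃g friendshipGraph n where
  toEquiv := (σ.prodShear τ).optionCongr
  map_rel_iff' {u v} := by
    rcases u with _ | ⟨i, j⟩ <;> rcases v with _ | ⟨i', j'⟩
    · simp
    · simp [adj_none_left]
    · simp [adj_none_left, (friendshipGraph n).adj_comm (some _) none]
    · simp only [optionCongr_apply, Option.map_some, prodShear_apply, adj_some_some,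
        σ.injective.eq_iff, Ne, Prod.ext_iff, and_congr_right_iff]
      rintro rfl
      simp

@[simp]
lemma shearIso_none (σ : Perm (Fin n)) (τ : Fin n → Perm (Fin 2)) :
    shearIso σ τ none = none :=
  rfl

@[simp]
lemma shearIso_some (σ : Perm (Fin n)) (τ : Fin n → Perm (Fin 2)) (i : Fin n) (j : Fin 2) :
    shearIso σ τ (some (i, j)) = some (σ i, τ i j) :=
  rfl

variable {α : Type*}

def spokeLabel (f : Sym2 (Option (Fin n × Fin 2)) → α) (i : Fin n) (j : Fin 2) : α :=
  f s(none, some (i, j))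

def rimLabel (f : Sym2 (Option (Fin n × Fin 2)) → α) (i : Fin n) : α :=
  f s(some (i, 0), some (i, 1))

def triangleType (f : Sym2 (Option (Fin n × Fin 2)) → α) (i : Fin n) : Sym2 α × α :=
  (s(spokeLabel f i 0, spokeLabel f i 1), rimLabel f i)

lemma apply_rim_edge (f : Sym2 (Option (Fin n × Fin 2)) → α) (i : Fin n) {j j' : Fin 2}
    (h : j ≠ j') : f s(some (i, j), some (i, j')) = rimLabel f i := by
  rw [rimLabel, sym2_mk_fin_two_of_ne (fun j => some (i, j)) h]

lemma shearIso_preserves {f : Sym2 (Option (Fin n × Fin 2)) → α} {σ : Perm (Fin n)}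
    {τ : Fin n → Perm (Fin 2)}
    (hspoke : ∀ i j, spokeLabel f (σ i) (τ i j) = spokeLabel f i j)
    (hrim : ∀ i, rimLabel f (σ i) = rimLabel f i) :
    ∀ e ∈ (friendshipGraph n).edgeSet, f (Sym2.map (shearIso σ τ) e) = f e := by
  refine Sym2.ind fun u v he => ?_
  rw [mem_edgeSet] at he
  rcases u with _ | ⟨i, j⟩ <;> rcases v with _ | ⟨i', j'⟩
  · simp at he
  · exact hspoke i' j'
  · simpa [spokeLabel, Sym2.eq_swap (b := none)] using hspoke i j
  · obtain ⟨rfl, hne⟩ := adj_some_some.1 he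
    have hj : j ≠ j' := fun h => hne (by rw [h])
    simp only [Sym2.map_mk, shearIso_some]
    rw [apply_rim_edge f _ ((τ i).injective.ne hj), apply_rim_edge f _ hj, hrim]

lemma not_isDistinguishingEdgeLabeling_of_triangle_match {f : Sym2 (Option (Fin n × Fin 2)) → α}
    {i i' : Fin n} (σ : Perm (Fin 2)) (hspoke : ∀ j, spokeLabel f i' (σ j) = spokeLabel f i j)
    (hrim : rimLabel f i' = rimLabel f i) (hne : i' ≠ i ∨ σ ≠ 1) :
    ¬(friendshipGraph n).IsDistinguishingEdgeLabeling_s16 f := by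
  classical
  -- move triangle `i` onto `i'` along `σ`, and `i'` back onto `i` along `σ⁻¹`
  set τ : Fin n → Perm (Fin 2) := fun k => if k = i then σ else if k = i' then σ⁻¹ else 1
  have hspoke' : ∀ k j, spokeLabel f (swap i i' k) (τ k j) = spokeLabel f k j := by
    intro k j
    rcases eq_or_ne k i with rfl | hki
    · simp [τ, hspoke]
    rcases eq_or_ne k i' with rfl | hki'
    · simpa [τ, hki] using (hspoke (σ⁻¹ j)).symm
    · simp [τ, swap_apply_of_ne_of_ne hki hki', hki, hki']
  have hrim' : ∀ k, rimLabel f (swap i i' k) = rimLabel f k := by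
    intro k
    rcases eq_or_ne k i with rfl | hki
    · simp [hrim]
    rcases eq_or_ne k i' with rfl | hki'
    · simp [hrim]
    · rw [swap_apply_of_ne_of_ne hki hki']
  obtain ⟨j, hj⟩ : ∃ j, (i', σ j) ≠ (i, j) := by
    by_contra! h
    rcases hne with hne | hne
    · exact hne (congrArg Prod.fst (h 0))
    · exact hne (Equiv.ext fun j => congrArg Prod.snd (h j))
  intro hf
  have := hf (shearIso (swap i i') τ) (shearIso_preserves hspoke' hrim') (some (i, j))
  simp only [shearIso_some, swap_apply_left, τ, Option.some.injEq] at this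
  exact hj this

lemma isDistinguishingEdgeLabeling_of_triangleType (hn : 2 ≤ n)
    {f : Sym2 (Option (Fin n × Fin 2)) → α}
    (hdiag : ∀ i, ¬(triangleType f i).1.IsDiag) (hinj : Injective (triangleType f)) :
    (friendshipGraph n).IsDistinguishingEdgeLabeling_s16 f := by
  intro φ hφ
  have hnone := apply_none hn φ
  have hmap : ∀ u v, (friendshipGraph n).Adj u v → f s(φ u, φ v) = f s(u, v) :=
    fun u v h => hφ s(u, v) h
  have hsome : ∀ x, ∃ y, φ (some x) = some y := fun x =>
    Option.ne_none_iff_exists'.1 fun h => by simpa using φ.injective (h.trans hnone.symm)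
  suffices h : ∀ i, φ (some (i, 0)) = some (i, 0) ∧ φ (some (i, 1)) = some (i, 1) by
    rintro (_ | ⟨i, j⟩)
    · exact hnone
    · fin_cases j
      exacts [(h i).1, (h i).2]
  intro i
  obtain ⟨⟨i₀, j₀⟩, h₀⟩ := hsome (i, 0)
  obtain ⟨⟨i₁, j₁⟩, h₁⟩ := hsome (i, 1)
  have hrim_edge : (friendshipGraph n).Adj (some (i, 0)) (some (i, 1)) :=
    adj_some_some.2 ⟨rfl, by simp⟩
  obtain ⟨rfl, hne⟩ := adj_some_some.1 (h₀ ▸ h₁ ▸ φ.map_adj_iff.2 hrim_edge)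
  have hj : j₀ ≠ j₁ := fun h => hne (by rw [h])
  have hs₀ : spokeLabel f i₀ j₀ = spokeLabel f i 0 := by
    have := hmap none _ (adj_none_left.2 (Option.some_ne_none (i, 0)))
    rwa [hnone, h₀] at this
  have hs₁ : spokeLabel f i₀ j₁ = spokeLabel f i 1 := by
    have := hmap none _ (adj_none_left.2 (Option.some_ne_none (i, 1)))
    rwa [hnone, h₁] at this
  have hr : rimLabel f i₀ = rimLabel f i := by
    rw [← apply_rim_edge f i₀ hj, ← h₀, ← h₁]
    exact hmap _ _ hrim_edge
  -- triangle `i` is mapped onto triangle `i₀`, which therefore has the same type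
  obtain rfl : i₀ = i := hinj <| Prod.ext
    (by rw [triangleType, ← sym2_mk_fin_two_of_ne _ hj, hs₀, hs₁]; rfl) hr
  have hspoke_inj := injective_fin_two_of_ne (Sym2.mk_isDiag_iff.not.1 (hdiag i₀))
  exact ⟨by rw [h₀, hspoke_inj hs₀], by rw [h₁, hspoke_inj hs₁]⟩

lemma isDistinguishingEdgeLabeling_iff (hn : 2 ≤ n) {f : Sym2 (Option (Fin n × Fin 2)) → α} :
    (friendshipGraph n).IsDistinguishingEdgeLabeling_s16 f ↔
      (∀ i, ¬(triangleType f i).1.IsDiag) ∧ Injective (triangleType f) := by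
  refine ⟨fun hf => ⟨fun i hdiag => ?_, fun i i' h => ?_⟩,
    fun h => isDistinguishingEdgeLabeling_of_triangleType hn h.1 h.2⟩
  · rw [triangleType, Sym2.mk_isDiag_iff] at hdiag
    refine not_isDistinguishingEdgeLabeling_of_triangle_match (i := i) (i' := i) (swap 0 1) ?_ rfl
      (Or.inr ?_) hf
    · exact Fin.forall_fin_two.2 ⟨by simp [hdiag], by simp [hdiag]⟩
    · exact fun h => by simpa using congrArg (· 0) h
  · by_contra hne
    obtain ⟨σ, hσ⟩ := exists_perm_fin_two_of_sym2_eq (congrArg Prod.fst h)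
    exact not_isDistinguishingEdgeLabeling_of_triangle_match σ hσ (congrArg Prod.snd h).symm
      (Or.inl (Ne.symm hne)) hf

lemma exists_triangleType_eq [Nonempty α] (t : Fin n → Sym2 α × α) :
    ∃ f : Sym2 (Option (Fin n × Fin 2)) → α, triangleType f = t := by
  classical
  have hrep : ∀ z : Sym2 α, ∃ a b, s(a, b) = z := Sym2.ind fun a b => ⟨a, b, rfl⟩
  choose a b hab using fun i => hrep (t i).1
  let spoke (x : Fin n × Fin 2) : α := if x.2 = 0 then a x.1 else b x.1
  let label : Option (Fin n × Fin 2) → Option (Fin n × Fin 2) → α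
    | none, some x | some x, none => spoke x
    | some x, some y => if x.1 = y.1 then (t x.1).2 else Classical.arbitrary α
    | none, none => Classical.arbitrary α
  have label_comm : ∀ u v, label u v = label v u := by
    rintro (_ | x) (_ | y)
    · rfl
    · rfl
    · rfl
    · by_cases h : x.1 = y.1 <;> simp [label, h, eq_comm]
  refine ⟨Sym2.lift ⟨label, label_comm⟩, funext fun i => ?_⟩
  simp [triangleType, spokeLabel, rimLabel, label, spoke, hab]

lemma exists_isDistinguishingEdgeLabeling_iff (hn : 2 ≤ n) [Fintype α] [DecidableEq α] :
    (∃ f : Sym2 (Option (Fin n × Fin 2)) → α,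
        (friendshipGraph n).IsDistinguishingEdgeLabeling_s16 f) ↔
      n ≤ (Fintype.card α).choose 2 * Fintype.card α := by
  rw [← Fintype.card_subtype_not_isDiag_fst]
  constructor
  · rintro ⟨f, hf⟩
    obtain ⟨hdiag, hinj⟩ := (isDistinguishingEdgeLabeling_iff hn).1 hf
    simpa using Fintype.card_le_of_injective
      (fun i => (⟨triangleType f i, hdiag i⟩ : {p : Sym2 α × α // ¬p.1.IsDiag}))
      fun i i' h => hinj (congrArg Subtype.val h)
  · intro h
    obtain ⟨g⟩ := Function.Embedding.nonempty_of_card_le (α := Fin n)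
      (β := {p : Sym2 α × α // ¬p.1.IsDiag}) (by rwa [Fintype.card_fin])
    have : Nonempty α := ⟨(g ⟨0, by omega⟩).1.2⟩
    obtain ⟨f, hf⟩ := exists_triangleType_eq fun i => (g i).1
    refine ⟨f, (isDistinguishingEdgeLabeling_iff hn).2 ⟨fun i => hf ▸ (g i).2, hf ▸ ?_⟩⟩
    exact Subtype.val_injective.comp g.injective

end friendshipGraph

theorem distinguishingIndex_friendship (n : ℕ) (hn : 2 ≤ n) :
    distinguishingIndex (windmill n 3) =
      sInf {r : ℕ | n ≤ (r ^ 3 - r ^ 2) / 2} := by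
  refine congrArg sInf (Set.ext fun d => ?_)
  show (∃ f : Sym2 (Option (Fin n × Fin 2)) → Fin d,
    (friendshipGraph n).IsDistinguishingEdgeLabeling_s16 f) ↔ n ≤ (d ^ 3 - d ^ 2) / 2
  rw [friendshipGraph.exists_isDistinguishingEdgeLabeling_iff hn, Fintype.card_fin,
    Nat.choose_two_mul_self]
end

section
/- If G is a connected graph of order n ≥ 7 that has a Hamiltonian path, then D'(G) ≤ 2. -/
open SimpleGraph

/-!
If `H ≤ G` is preserved by no nontrivial automorphism of `G`, labelling the edges of `H` by `1`
and all other edges by `0` is distinguishing. Let `w₀ … w_{n-1}` be a Hamiltonian path.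
* If `w₀ w_{n-1}` is not an edge, take `H` = the path without `w₀ w₁`: an automorphism of `H`
  fixes the isolated `w₀` and fixes or reverses `w₁ … w_{n-1}`; the reversal would send the edge
  `w₀ w₁` of `G` to the non-edge `w₀ w_{n-1}`.
* If the path closes to a Hamiltonian cycle with a chord, read the cycle from a suitable vertex
  so that the chord joins `w₁` and `w_b` with `3 ≤ b ≤ n - 3` (possible as `n ≥ 7`); the path
  plus this chord is an asymmetric graph.
* Otherwise `G` is the cycle itself, and `H = {w₀ w₁, w₁ w₂, w₃ w₄}` is fixed by no nontrivial
  rotation or reflection.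
The rigidity arguments run on indices: automorphisms preserve degrees, and one that fixes two
consecutive vertices of a run of degree-two vertices fixes the whole run.
-/

namespace HamiltonianDistinguishing

structure IsAutOn (n : ℕ) (Γ : SimpleGraph ℕ) (π : ℕ → ℕ) : Prop where
  lt : ∀ k < n, π k < n
  injOn : ∀ i < n, ∀ j < n, π i = π j → i = j
  adj_iff : ∀ i < n, ∀ j < n, (Γ.Adj (π i) (π j) ↔ Γ.Adj i j)

namespace IsAutOn

variable {n : ℕ} {Γ : SimpleGraph ℕ} {π : ℕ → ℕ}

theorem exists_eq (h : IsAutOn n Γ π) {m : ℕ} (hm : m < n) : ∃ k < n, π k = m := by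
  have himage : (Finset.range n).image π = Finset.range n := by
    refine Finset.eq_of_subset_of_card_le ?_ ?_
    · intro m hm
      simp only [Finset.mem_image, Finset.mem_range] at hm ⊢
      obtain ⟨k, hk, rfl⟩ := hm
      exact h.lt k hk
    · rw [Finset.card_image_of_injOn fun i hi j hj =>
        h.injOn i (by simpa using hi) j (by simpa using hj)]
  have hmem : m ∈ (Finset.range n).image π := by rw [himage]; exact Finset.mem_range.2 hm
  simpa using hmem

theorem congr {Γ' : SimpleGraph ℕ} (h : IsAutOn n Γ π)
    (hΓ : ∀ i < n, ∀ j < n, (Γ.Adj i j ↔ Γ'.Adj i j)) : IsAutOn n Γ' π :=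
  ⟨h.lt, h.injOn, fun i hi j hj => by
    rw [← hΓ _ (h.lt i hi) _ (h.lt j hj), ← hΓ i hi j hj, h.adj_iff i hi j hj]⟩

theorem card_le_of_nbrs (h : IsAutOn n Γ π) {x : ℕ} (hx : x < n) {s t : Finset ℕ}
    (ht : ∀ m ∈ t, m < n ∧ Γ.Adj x m) (hs : ∀ m < n, Γ.Adj (π x) m → m ∈ s) :
    t.card ≤ s.card :=
  Finset.card_le_card_of_injOn π
    (fun m hm => hs _ (h.lt m (ht m hm).1) ((h.adj_iff x hx m (ht m hm).1).2 (ht m hm).2))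
    (fun i hi j hj => h.injOn i (ht i hi).1 j (ht j hj).1)

theorem card_le_of_nbrs_image (h : IsAutOn n Γ π) {x : ℕ} (hx : x < n) {s t : Finset ℕ}
    (ht : ∀ m ∈ t, m < n ∧ Γ.Adj (π x) m) (hs : ∀ m < n, Γ.Adj x m → m ∈ s) :
    t.card ≤ s.card :=
  Finset.card_le_card_of_surjOn π fun m hm => by
    obtain ⟨k, hk, rfl⟩ := h.exists_eq (ht m hm).1
    exact ⟨k, hs k hk ((h.adj_iff x hx k hk).1 (ht _ hm).2), rfl⟩

theorem eq_self_of_chain (h : IsAutOn n Γ π) {a b : ℕ} (hb : b < n)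
    (hnbr : ∀ k, a < k → k < b → ∀ m < n, (Γ.Adj k m ↔ m + 1 = k ∨ m = k + 1))
    (ha : π a = a) (ha' : π (a + 1) = a + 1) : ∀ k, a ≤ k → k ≤ b → π k = k := by
  have hpair : ∀ j, a + j < b → π (a + j) = a + j ∧ π (a + j + 1) = a + j + 1 := by
    intro j
    induction j with
    | zero => exact fun _ => ⟨ha, ha'⟩
    | succ j ih =>
      intro hj
      obtain ⟨hprev, hcur⟩ := ih (by omega)
      refine ⟨hcur, ?_⟩
      have hnext := (h.adj_iff _ (by omega) _ (by omega)).2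
        ((hnbr (a + j + 1) (by omega) (by omega) (a + j + 2) (by omega)).2 (Or.inr rfl))
      rw [hcur] at hnext
      rcases (hnbr _ (by omega) (by omega) _ (h.lt _ (by omega))).1 hnext with hback | hfwd
      · have := h.injOn (a + j + 2) (by omega) (a + j) (by omega) (by omega)
        omega
      · exact hfwd
  intro k hak hkb
  rcases Nat.eq_or_lt_of_le hak with rfl | hlt
  · exact ha
  · have := (hpair (k - a - 1) (by omega)).2
    rwa [show a + (k - a - 1) + 1 = k by omega] at this

end IsAutOn

/- Graphs on indices: only their restriction to `{0, …, n - 1}` is ever used. -/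

def pathFrom (a : ℕ) : SimpleGraph ℕ := fromRel fun i j => a ≤ i ∧ i + 1 = j

def pathChord (b : ℕ) : SimpleGraph ℕ := fromRel fun i j => i + 1 = j ∨ (i = 1 ∧ j = b)

def cycleOn (n : ℕ) : SimpleGraph ℕ := fromRel fun i j => i + 1 = j ∨ (i = 0 ∧ j + 1 = n)

def cycleMarking : SimpleGraph ℕ :=
  fromRel fun i j => (i = 0 ∧ j = 1) ∨ (i = 1 ∧ j = 2) ∨ (i = 3 ∧ j = 4)

namespace IsAutOn

variable {n : ℕ} {π : ℕ → ℕ}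

theorem eq_self_of_pathFrom_one {Γ : SimpleGraph ℕ} (hn : 3 ≤ n)
    (h : IsAutOn n (pathFrom 1) π) (hΓ : IsAutOn n Γ π) (h01 : Γ.Adj 0 1)
    (h0n : ¬ Γ.Adj 0 (n - 1)) : ∀ k < n, π k = k := by
  have h0 : π 0 = 0 := by
    by_contra hne
    have hπ0 := h.lt 0 (by omega)
    obtain ⟨m, hm, hadj⟩ : ∃ m < n, (pathFrom 1).Adj (π 0) m :=
      ⟨if π 0 = 1 then 2 else π 0 - 1, by split_ifs <;> omega,
        by simp only [pathFrom, fromRel_adj]; split_ifs <;> omega⟩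
    obtain ⟨k, hk, rfl⟩ := h.exists_eq hm
    rw [h.adj_iff 0 (by omega) k hk] at hadj
    simp only [pathFrom, fromRel_adj] at hadj
    omega
  have h1 : π 1 = 1 := by
    have hπ1 := h.lt 1 (by omega)
    have hne : π 1 ≠ 0 := fun h' => by
      have := h.injOn 1 (by omega) 0 (by omega) (h'.trans h0.symm)
      omega
    have hend : π 1 = 1 ∨ π 1 = n - 1 := by
      by_contra hmid
      have := h.card_le_of_nbrs_image (x := 1) (by omega) (t := {π 1 - 1, π 1 + 1}) (s := {2})
        (by simp only [Finset.mem_insert, Finset.mem_singleton, pathFrom, fromRel_adj]; omega)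
        (by simp only [Finset.mem_singleton, pathFrom, fromRel_adj]; omega)
      rw [Finset.card_pair (by omega), Finset.card_singleton] at this
      omega
    have hΓ01 := (hΓ.adj_iff 0 (by omega) 1 (by omega)).2 h01
    rw [h0] at hΓ01
    rcases hend with h1 | h1
    · exact h1
    · exact absurd (h1 ▸ hΓ01) h0n
  have h2 : π 2 = 2 := by
    have := (h.adj_iff 1 (by omega) 2 (by omega)).2 (by simp [pathFrom])
    rw [h1] at this
    simp only [pathFrom, fromRel_adj] at this
    omega
  have hchain := h.eq_self_of_chain (a := 1) (b := n - 1) (by omega)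
    (fun k _ _ m _ => by simp only [pathFrom, fromRel_adj]; omega) h1 h2
  intro k hk
  rcases Nat.eq_zero_or_pos k with rfl | hk0
  · exact h0
  · exact hchain k hk0 (by omega)

/- `0` and `n - 1` are the only leaves, and only `0` hangs on a vertex of degree three. -/
theorem map_zero_of_pathChord {b : ℕ} (hb : 3 ≤ b) (hbn : b + 3 ≤ n)
    (h : IsAutOn n (pathChord b) π) : π 0 = 0 := by
  have hπ0 := h.lt 0 (by omega)
  have hleaf : π 0 = 0 ∨ π 0 = n - 1 := by
    by_contra hmid
    have := h.card_le_of_nbrs_image (x := 0) (by omega) (t := {π 0 - 1, π 0 + 1}) (s := {1})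
      (by simp only [Finset.mem_insert, Finset.mem_singleton, pathChord, fromRel_adj]; omega)
      (by simp only [Finset.mem_singleton, pathChord, fromRel_adj]; omega)
    rw [Finset.card_pair (by omega), Finset.card_singleton] at this
    omega
  refine hleaf.resolve_right fun h0 => ?_
  have h1 : π 1 = n - 2 := by
    have h01 := (h.adj_iff 0 (by omega) 1 (by omega)).2 (by simp [pathChord])
    have := h.lt 1 (by omega)
    simp only [h0, pathChord, fromRel_adj] at h01
    omega
  have := h.card_le_of_nbrs (x := 1) (by omega) (t := {0, 2, b}) (s := {n - 3, n - 1})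
    (by simp only [Finset.mem_insert, Finset.mem_singleton, pathChord, fromRel_adj, true_and]
        omega)
    (by simp only [Finset.mem_insert, Finset.mem_singleton, h1, pathChord, fromRel_adj]; omega)
  rw [Finset.card_eq_three.2 ⟨0, 2, b, by omega, by omega, by omega, rfl⟩,
    Finset.card_pair (by omega)] at this
  omega

theorem eq_self_of_pathChord {b : ℕ} (hb : 3 ≤ b) (hbn : b + 3 ≤ n)
    (h : IsAutOn n (pathChord b) π) : ∀ k < n, π k = k := by
  have hinj := h.injOn
  have hadj : ∀ i < n, ∀ j < n, (pathChord b).Adj i j → (pathChord b).Adj (π i) (π j) :=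
    fun i hi j hj hij => (h.adj_iff i hi j hj).2 hij
  simp only [pathChord, fromRel_adj] at hadj
  have h0 := h.map_zero_of_pathChord hb hbn
  have h1 : π 1 = 1 := by
    have := hadj 0 (by omega) 1 (by omega) (by omega)
    omega
  have hbb : π b = b := by
    have hnot2 : π b ≠ 2 := fun hb2 => by
      have := h.card_le_of_nbrs (x := b) (by omega) (t := {b - 1, b + 1, 1}) (s := {1, 3})
        (by simp only [Finset.mem_insert, Finset.mem_singleton, pathChord, fromRel_adj, and_true]
            omega)
        (by simp only [Finset.mem_insert, Finset.mem_singleton, hb2, pathChord, fromRel_adj]; omega)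
      rw [Finset.card_eq_three.2 ⟨b - 1, b + 1, 1, by omega, by omega, by omega, rfl⟩,
        Finset.card_pair (by omega)] at this
      omega
    have := hadj 1 (by omega) b (by omega) (by omega)
    have := hinj b (by omega) 0 (by omega)
    omega
  have h2 : π 2 = 2 := by
    have := hadj 1 (by omega) 2 (by omega) (by omega)
    have := hinj 2 (by omega) 0 (by omega)
    have := hinj 2 (by omega) b (by omega)
    omega
  have hlow := h.eq_self_of_chain (a := 1) (b := b) (by omega)
    (fun k _ _ m _ => by simp only [pathChord, fromRel_adj]; omega) h1 h2
  have hb1 : π (b + 1) = b + 1 := by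
    have := hadj b (by omega) (b + 1) (by omega) (by omega)
    have := hinj (b + 1) (by omega) (b - 1) (by omega)
    have := hinj (b + 1) (by omega) 1 (by omega)
    have := hlow (b - 1) (by omega) (by omega)
    omega
  have hhigh := h.eq_self_of_chain (a := b) (b := n - 1) (by omega)
    (fun k _ _ m _ => by simp only [pathChord, fromRel_adj]; omega) hbb hb1
  intro k hk
  rcases Nat.eq_zero_or_pos k with rfl | hk0
  · exact h0
  · rcases le_or_gt k b with hkb | hkb
    · exact hlow k hk0 hkb
    · exact hhigh k hkb.le (by omega)

theorem eq_self_of_cycleMarking (hn : 6 ≤ n) (h : IsAutOn n cycleMarking π)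
    (hC : IsAutOn n (cycleOn n) π) : ∀ k < n, π k = k := by
  have e01 := (h.adj_iff 0 (by omega) 1 (by omega)).2 (by simp [cycleMarking])
  have e12 := (h.adj_iff 1 (by omega) 2 (by omega)).2 (by simp [cycleMarking])
  have e34 := (h.adj_iff 3 (by omega) 4 (by omega)).2 (by simp [cycleMarking])
  have e23 := (hC.adj_iff 2 (by omega) 3 (by omega)).2 (by simp [cycleOn])
  have := h.injOn 0 (by omega) 2 (by omega)
  have := h.injOn 3 (by omega) 1 (by omega)
  have := h.injOn 4 (by omega) 1 (by omega)
  have := h.lt 2 (by omega)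
  have := h.lt 3 (by omega)
  simp only [cycleMarking, cycleOn, fromRel_adj] at e01 e12 e34 e23
  -- `π 1` is the only vertex with two marked neighbours, `{π 3, π 4} = {3, 4}`, and `π 2 = 0`
  -- is impossible because `0` is not next to `3` or `4` on the cycle.
  have h1 : π 1 = 1 := by omega
  have h2 : π 2 = 2 := by omega
  have h0 : π 0 = 0 := by omega
  have hchain := hC.eq_self_of_chain (a := 1) (b := n - 1) (by omega)
    (fun k _ _ m _ => by simp only [cycleOn, fromRel_adj]; omega) h1 h2
  intro k hk
  rcases Nat.eq_zero_or_pos k with rfl | hk0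
  · exact h0
  · exact hchain k hk0 (by omega)

end IsAutOn

theorem distinguishingIndex_le_two_of_rigid {V : Type*} {G H : SimpleGraph V} (hHG : H ≤ G)
    (hrigid : ∀ φ : G ≃g G, (∀ x y, H.Adj (φ x) (φ y) ↔ H.Adj x y) → ∀ v, φ v = v) :
    distinguishingIndex G ≤ 2 := by
  classical
  refine Nat.sInf_le
    ⟨fun e => if e ∈ H.edgeSet then 1 else 0, fun φ hφ => hrigid φ fun x y => ?_⟩
  by_cases hxy : G.Adj x y
  · have := hφ s(x, y) hxy
    simp only [Sym2.map_mk, mem_edgeSet] at this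
    split_ifs at this <;> simp_all
  · exact iff_of_false (fun h => hxy (φ.map_adj_iff.1 (hHG h))) (fun h => hxy (hHG h))

variable {V : Type*} [Fintype V]

theorem exists_lt_eq_of_injOn {w : ℕ → V} (hw : Set.InjOn w (Set.Iio (Fintype.card V)))
    (v : V) : ∃ k < Fintype.card V, w k = v := by
  classical
  have himage : (Finset.range (Fintype.card V)).image w = Finset.univ :=
    Finset.eq_univ_of_card _ (by
      rw [Finset.card_image_of_injOn (by simpa using hw), Finset.card_range])
  have hmem : v ∈ (Finset.range (Fintype.card V)).image w := himage ▸ Finset.mem_univ v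
  simpa using hmem

structure IsHamiltonianListing (G : SimpleGraph V) (w : ℕ → V) : Prop where
  injOn : Set.InjOn w (Set.Iio (Fintype.card V))
  adj : ∀ k, k + 1 < Fintype.card V → G.Adj (w k) (w (k + 1))

/- `c` runs around a Hamiltonian cycle forever, so that re-reading the cycle from another
vertex is just `c (· + s)`. -/
structure IsHamiltonianCycleListing (G : SimpleGraph V) (c : ℕ → V) : Prop where
  periodic : Function.Periodic c (Fintype.card V)
  injOn : Set.InjOn c (Set.Iio (Fintype.card V))
  adj : ∀ k, G.Adj (c k) (c (k + 1))

variable {G : SimpleGraph V}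

theorem isHamiltonianListing_getVert [DecidableEq V] {u v : V} {p : G.Walk u v}
    (hp : p.IsHamiltonian) : IsHamiltonianListing G p.getVert := by
  have hlen := hp.length_eq
  have hpos : 0 < Fintype.card V := Fintype.card_pos_iff.2 ⟨u⟩
  refine ⟨fun i hi j hj => hp.isPath.getVert_injOn ?_ ?_,
    fun k hk => p.adj_getVert_succ (by omega)⟩
  · exact show i ≤ p.length by rw [Set.mem_Iio] at hi; omega
  · exact show j ≤ p.length by rw [Set.mem_Iio] at hj; omega

namespace IsHamiltonianListing

variable {w : ℕ → V}

theorem toCycleListing (hw : IsHamiltonianListing G w)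
    (hclose : G.Adj (w (Fintype.card V - 1)) (w 0)) :
    IsHamiltonianCycleListing G fun k => w (k % Fintype.card V) where
  periodic k := by simp only [Nat.add_mod_right]
  injOn i hi j hj hij := by
    simp only [Nat.mod_eq_of_lt (Set.mem_Iio.1 hi), Nat.mod_eq_of_lt (Set.mem_Iio.1 hj)] at hij
    exact hw.injOn hi hj hij
  adj k := by
    have hn : 2 ≤ Fintype.card V := by
      by_contra hlt
      rw [show Fintype.card V - 1 = 0 by omega] at hclose
      exact G.irrefl hclose
    have hk := Nat.mod_lt k (show 0 < Fintype.card V by omega)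
    rw [Nat.add_mod, Nat.mod_eq_of_lt (show 1 < Fintype.card V by omega)]
    rcases Nat.lt_or_ge (k % Fintype.card V + 1) (Fintype.card V) with hlt | hge
    · rw [Nat.mod_eq_of_lt hlt]
      exact hw.adj _ hlt
    · rw [show k % Fintype.card V + 1 = Fintype.card V by omega, Nat.mod_self,
        show k % Fintype.card V = Fintype.card V - 1 by omega]
      exact hclose

end IsHamiltonianListing

namespace IsHamiltonianCycleListing

variable {c : ℕ → V}

theorem toListing (hc : IsHamiltonianCycleListing G c) : IsHamiltonianListing G c :=
  ⟨hc.injOn, fun k _ => hc.adj k⟩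

theorem comp_add (hc : IsHamiltonianCycleListing G c) (s : ℕ) :
    IsHamiltonianCycleListing G fun k => c (k + s) where
  periodic k := by simp only [add_right_comm k, hc.periodic _]
  injOn i hi j hj hij := by
    have hpos : 0 < Fintype.card V := Fintype.card_pos_iff.2 ⟨c 0⟩
    have hmod := hc.injOn (Nat.mod_lt _ hpos) (Nat.mod_lt _ hpos)
      (by simpa only [hc.periodic.map_mod_nat] using hij)
    exact (Nat.ModEq.add_right_cancel' s hmod).eq_of_lt_of_lt hi hj
  adj k := by simpa only [add_right_comm k 1 s] using hc.adj (k + s)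

theorem exists_listing_chord (hc : IsHamiltonianCycleListing G c) (hn : 7 ≤ Fintype.card V)
    {x d : ℕ} (hd : 2 ≤ d) (hdn : d + 2 ≤ Fintype.card V) (hadj : G.Adj (c x) (c (x + d))) :
    ∃ w b, IsHamiltonianListing G w ∧ 3 ≤ b ∧ b + 3 ≤ Fintype.card V ∧
      G.Adj (w 1) (w b) := by
  -- Of the two arcs of the cycle between the ends of the chord, one has at most `n - 4` edges;
  -- the path starting one vertex before that arc sees the chord at positions `1` and `e + 1`.
  obtain ⟨y, e, he, hen, hadj'⟩ :
      ∃ y e, 2 ≤ e ∧ e + 4 ≤ Fintype.card V ∧ G.Adj (c y) (c (y + e)) := by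
    by_cases hd' : d + 4 ≤ Fintype.card V
    · exact ⟨x, d, hd, hd', hadj⟩
    · refine ⟨x + d, Fintype.card V - d, by omega, by omega, ?_⟩
      rw [show x + d + (Fintype.card V - d) = x + Fintype.card V by omega, hc.periodic]
      exact hadj.symm
  refine ⟨fun k => c (k + (y + Fintype.card V - 1)), e + 1, (hc.comp_add _).toListing,
    by omega, by omega, ?_⟩
  dsimp only
  rw [show 1 + (y + Fintype.card V - 1) = y + Fintype.card V by omega,
    show e + 1 + (y + Fintype.card V - 1) = y + e + Fintype.card V by omega,
    hc.periodic, hc.periodic]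
  exact hadj'

theorem adj_iff_cycleOn (hc : IsHamiltonianCycleListing G c)
    (hno : ∀ x d, 2 ≤ d → d + 2 ≤ Fintype.card V → ¬ G.Adj (c x) (c (x + d))) :
    ∀ i < Fintype.card V, ∀ j < Fintype.card V,
      ((G.comap c).Adj i j ↔ (cycleOn (Fintype.card V)).Adj i j) := by
  have hclose : ∀ i, i + 1 = Fintype.card V → G.Adj (c i) (c 0) := fun i hi => by
    have := hc.adj i
    rwa [hi, ← zero_add (Fintype.card V), hc.periodic] at this
  have hstep : ∀ i j, i < j → j < Fintype.card V → G.Adj (c i) (c j) →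
      i + 1 = j ∨ (i = 0 ∧ j + 1 = Fintype.card V) := fun i j hij hj hadj => by
    by_contra hne
    exact hno i (j - i) (by omega) (by omega) (by rwa [Nat.add_sub_cancel' hij.le])
  intro i hi j hj
  simp only [comap_adj, cycleOn, fromRel_adj]
  constructor
  · intro hadj
    rcases lt_trichotomy i j with hij | rfl | hij
    · have := hstep i j hij hj hadj
      omega
    · exact (G.irrefl hadj).elim
    · have := hstep j i hij hi hadj.symm
      omega
  · rintro ⟨-, (rfl | ⟨rfl, hj'⟩) | rfl | ⟨rfl, hi'⟩⟩
    · exact hc.adj i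
    · exact (hclose j hj').symm
    · exact (hc.adj j).symm
    · exact hclose i hi'

end IsHamiltonianCycleListing

theorem distinguishingIndex_le_two_of_listing {w : ℕ → V} (hw : IsHamiltonianListing G w)
    (Γ : SimpleGraph ℕ)
    (hΓG : ∀ i < Fintype.card V, ∀ j < Fintype.card V, Γ.Adj i j → G.Adj (w i) (w j))
    (hrigid : ∀ π, IsAutOn (Fintype.card V) Γ π → IsAutOn (Fintype.card V) (G.comap w) π →
      ∀ k < Fintype.card V, π k = k) :
    distinguishingIndex G ≤ 2 := by
  set n := Fintype.card V
  let e : Fin n ↪ V := ⟨fun i => w i, fun i j hij => Fin.ext (hw.injOn i.2 j.2 hij)⟩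
  refine distinguishingIndex_le_two_of_rigid (H := (Γ.comap Fin.val).map e)
    ((map_le_iff_le_comap _ _ _).2 fun i j hij => hΓG _ i.2 _ j.2 hij) fun φ hφ => ?_
  choose π hπn hπ using fun k => exists_lt_eq_of_injOn hw.injOn (φ (w k))
  have hconj : ∀ {K : SimpleGraph V} {Δ : SimpleGraph ℕ},
      (∀ x y, K.Adj (φ x) (φ y) ↔ K.Adj x y) →
      (∀ i < n, ∀ j < n, (Δ.Adj i j ↔ K.Adj (w i) (w j))) → IsAutOn n Δ π :=
    fun hK hΔ => ⟨fun k _ => hπn k,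
      fun i hi j hj hij => hw.injOn hi hj (φ.injective (by rw [← hπ, ← hπ, hij])),
      fun i hi j hj => by rw [hΔ _ (hπn i) _ (hπn j), hΔ _ hi _ hj, hπ, hπ, hK]⟩
  have hid := hrigid π
    (hconj hφ fun i hi j hj =>
      (map_adj_apply (G := Γ.comap Fin.val) (f := e) (a := ⟨i, hi⟩) (b := ⟨j, hj⟩)).symm)
    (hconj (fun _ _ => φ.map_adj_iff) fun _ _ _ _ => Iff.rfl)
  intro v
  obtain ⟨k, hk, rfl⟩ := exists_lt_eq_of_injOn hw.injOn v
  rw [← hπ, hid k hk]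

theorem distinguishingIndex_le_two_of_not_adj {w : ℕ → V} (hw : IsHamiltonianListing G w)
    (hn : 3 ≤ Fintype.card V) (hopen : ¬ G.Adj (w 0) (w (Fintype.card V - 1))) :
    distinguishingIndex G ≤ 2 := by
  refine distinguishingIndex_le_two_of_listing hw (pathFrom 1) (fun i _ j _ hij => ?_)
    fun π hπ hG => hπ.eq_self_of_pathFrom_one hn hG (hw.adj 0 (by omega)) hopen
  simp only [pathFrom, fromRel_adj] at hij
  rcases hij with ⟨-, ⟨-, rfl⟩ | ⟨-, rfl⟩⟩
  · exact hw.adj i (by omega)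
  · exact (hw.adj j (by omega)).symm

theorem distinguishingIndex_le_two_of_chord {w : ℕ → V} (hw : IsHamiltonianListing G w)
    {b : ℕ} (hb : 3 ≤ b) (hbn : b + 3 ≤ Fintype.card V) (hchord : G.Adj (w 1) (w b)) :
    distinguishingIndex G ≤ 2 := by
  refine distinguishingIndex_le_two_of_listing hw (pathChord b) (fun i _ j _ hij => ?_)
    fun π hπ _ => hπ.eq_self_of_pathChord hb hbn
  simp only [pathChord, fromRel_adj] at hij
  rcases hij with ⟨-, (rfl | ⟨rfl, rfl⟩) | rfl | ⟨rfl, rfl⟩⟩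
  · exact hw.adj i (by omega)
  · exact hchord
  · exact (hw.adj j (by omega)).symm
  · exact hchord.symm

theorem distinguishingIndex_le_two_of_no_chord {c : ℕ → V} (hc : IsHamiltonianCycleListing G c)
    (hn : 6 ≤ Fintype.card V)
    (hno : ∀ x d, 2 ≤ d → d + 2 ≤ Fintype.card V → ¬ G.Adj (c x) (c (x + d))) :
    distinguishingIndex G ≤ 2 := by
  refine distinguishingIndex_le_two_of_listing hc.toListing cycleMarking (fun i _ j _ hij => ?_)
    fun π hπ hG => hπ.eq_self_of_cycleMarking hn (hG.congr (hc.adj_iff_cycleOn hno))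
  simp only [cycleMarking, fromRel_adj] at hij
  obtain ⟨-, hij | hij⟩ := hij <;> obtain ⟨rfl, rfl⟩ | ⟨rfl, rfl⟩ | ⟨rfl, rfl⟩ := hij
  exacts [hc.adj 0, hc.adj 1, hc.adj 3, (hc.adj 0).symm, (hc.adj 1).symm, (hc.adj 3).symm]

end HamiltonianDistinguishing

open HamiltonianDistinguishing

theorem distinguishingIndex_le_two_of_hamiltonianPath_general {V : Type*} [Fintype V] [DecidableEq V]
    (G : SimpleGraph V) (hcard : 7 ≤ Fintype.card V)
    (hham : ∃ (u v : V) (p : G.Walk u v), p.IsPath ∧ p.IsHamiltonian) :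
    distinguishingIndex G ≤ 2 := by
  obtain ⟨u, v, p, -, hp⟩ := hham
  have hw := isHamiltonianListing_getVert hp
  by_cases hclose : G.Adj (p.getVert (Fintype.card V - 1)) (p.getVert 0)
  · obtain ⟨c, hc⟩ : ∃ c, IsHamiltonianCycleListing G c := ⟨_, hw.toCycleListing hclose⟩
    by_cases hchord : ∃ x d, 2 ≤ d ∧ d + 2 ≤ Fintype.card V ∧ G.Adj (c x) (c (x + d))
    · obtain ⟨x, d, hd, hdn, hadj⟩ := hchord
      obtain ⟨w, b, hw', hb, hbn, hwb⟩ := hc.exists_listing_chord hcard hd hdn hadj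
      exact distinguishingIndex_le_two_of_chord hw' hb hbn hwb
    · push Not at hchord
      exact distinguishingIndex_le_two_of_no_chord hc (by omega) hchord
  · exact distinguishingIndex_le_two_of_not_adj hw (by omega) fun h => hclose h.symm

theorem distinguishingIndex_le_two_of_hamiltonianPath {V : Type*} [Fintype V] [DecidableEq V]
    (G : SimpleGraph V) (hconn : G.Connected) (hcard : 7 ≤ Fintype.card V)
    (hham : ∃ (u v : V) (p : G.Walk u v), p.IsPath ∧ p.IsHamiltonian) :
    distinguishingIndex G ≤ 2 :=
  distinguishingIndex_le_two_of_hamiltonianPath_general G hcard hham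
end
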